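/- arXiv:2104.01362 — 6 statements merged into one kernel-verified Lean document; each statement's English description precedes it below -/
import Mathlib

section
/- Let a < b be real numbers and δ > 0. Let G : (a,b)×(−δ,δ) → ℝ be a C^∞-smooth function satisfying the invariance relation G(τ + √h, h) = G(τ, h) for all τ with τ, τ + √h ∈ (a,b) and all h ∈ [0,δ). Then all mixed partial derivatives of G involving τ vanish on the boundary interval: for every τ₀ ∈ (a,b) and all integers m ≥ 1, n ≥ 0, one has ∂^{m+n}G/∂τ^m∂h^n(τ₀, 0) = 0. In particular, the Taylor series of G at each point (τ₀,0) contains only powers of h, so any two C^∞-smooth functions invariant under the map F(τ,h) = (τ+√h, h) and agreeing to infinite order in h on J = (a,b)×{0} have the same infinite jet at every point of J. -/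
open Set Filter Metric
open scoped ContDiff

noncomputable section
namespace S6

def e1 : ℝ × ℝ := (1, 0)
def e2 : ℝ × ℝ := (0, 1)

/-- directional derivative operator -/
def Pd (v : ℝ × ℝ) (f : ℝ × ℝ → ℝ) : ℝ × ℝ → ℝ := fun y => fderiv ℝ f y v

lemma infty_add_one : (∞ : WithTop ℕ∞) + 1 ≤ ∞ := le_of_eq rfl

lemma one_le_infty : (∞ : WithTop ℕ∞) ≠ 0 := by simp

lemma two_le_infty : minSmoothness ℝ 2 ≤ ∞ := by
  rw [minSmoothness_of_isRCLikeNormedField]; decide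

lemma Pd.contDiff {f : ℝ × ℝ → ℝ} (hf : ContDiff ℝ ∞ f) (v : ℝ × ℝ) :
    ContDiff ℝ ∞ (Pd v f) :=
  (hf.fderiv_right infty_add_one).clm_apply contDiff_const

lemma Pd.iter_contDiff {f : ℝ × ℝ → ℝ} (hf : ContDiff ℝ ∞ f) (v : ℝ × ℝ) (k : ℕ) :
    ContDiff ℝ ∞ ((Pd v)^[k] f) := by
  induction k generalizing f with
  | zero => exact hf
  | succ k ih => rw [Function.iterate_succ_apply]; exact ih (Pd.contDiff hf v)

lemma Pd.comm {f : ℝ × ℝ → ℝ} (hf : ContDiff ℝ ∞ f) (v w : ℝ × ℝ) :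
    Pd v (Pd w f) = Pd w (Pd v f) := by
  funext y
  have hd : DifferentiableAt ℝ (fderiv ℝ f) y :=
    ((hf.fderiv_right infty_add_one).differentiable one_le_infty).differentiableAt
  have h1 : HasFDerivAt (fderiv ℝ f) (fderiv ℝ (fderiv ℝ f) y) y := hd.hasFDerivAt
  have key : ∀ u : ℝ × ℝ, fderiv ℝ (fun z => fderiv ℝ f z u) y =
      (ContinuousLinearMap.apply ℝ ℝ u).comp (fderiv ℝ (fderiv ℝ f) y) := by
    intro u
    exact (((ContinuousLinearMap.apply ℝ ℝ u).hasFDerivAt).comp y h1).fderiv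
  have hsymm : ∀ a b : ℝ × ℝ, fderiv ℝ (fderiv ℝ f) y a b = fderiv ℝ (fderiv ℝ f) y b a :=
    hf.contDiffAt.isSymmSndFDerivAt two_le_infty
  show fderiv ℝ (fun z => fderiv ℝ f z w) y v = fderiv ℝ (fun z => fderiv ℝ f z v) y w
  rw [key w, key v]
  simpa using hsymm v w

lemma Pd.congr_nhds {f g : ℝ × ℝ → ℝ} {x : ℝ × ℝ} (h : f =ᶠ[nhds x] g) (v : ℝ × ℝ) :
    Pd v f =ᶠ[nhds x] Pd v g :=
  (h.fderiv (𝕜 := ℝ)).mono fun y hy => by show fderiv ℝ f y v = fderiv ℝ g y v; rw [hy]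

lemma Pd.iter_congr_nhds {f g : ℝ × ℝ → ℝ} {x : ℝ × ℝ} (h : f =ᶠ[nhds x] g) (v : ℝ × ℝ)
    (k : ℕ) : (Pd v)^[k] f =ᶠ[nhds x] (Pd v)^[k] g := by
  induction k generalizing f g with
  | zero => exact h
  | succ k ih =>
    rw [Function.iterate_succ_apply, Function.iterate_succ_apply]
    exact ih (Pd.congr_nhds h v)


/-- the linear map `(τ,t) ↦ (τ+t, t)` -/
def Lm : ℝ × ℝ →L[ℝ] ℝ × ℝ :=
  (ContinuousLinearMap.fst ℝ ℝ ℝ + ContinuousLinearMap.snd ℝ ℝ ℝ).prod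
    (ContinuousLinearMap.snd ℝ ℝ ℝ)

@[simp] lemma Lm_apply (y : ℝ × ℝ) : Lm y = (y.1 + y.2, y.2) := rfl

lemma Lm_e1 : Lm e1 = e1 := by simp [e1]

lemma Lm_e2 : Lm e2 = e1 + e2 := by simp [e1, e2, Prod.ext_iff]

/-- the square map `(τ,t) ↦ (τ, t²)` -/
def Sq : ℝ × ℝ → ℝ × ℝ := fun y => (y.1, y.2 ^ 2)

lemma contDiff_Sq : ContDiff ℝ ∞ Sq := contDiff_fst.prodMk (contDiff_snd.pow 2)

/-- derivative of Sq -/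
def SqD (y : ℝ × ℝ) : ℝ × ℝ →L[ℝ] ℝ × ℝ :=
  (ContinuousLinearMap.fst ℝ ℝ ℝ).prod ((2 * y.2) • ContinuousLinearMap.snd ℝ ℝ ℝ)

lemma hasFDerivAt_Sq (y : ℝ × ℝ) : HasFDerivAt Sq (SqD y) y := by
  have h2 : HasFDerivAt (fun z : ℝ × ℝ => z.2 ^ 2)
      ((2 * y.2) • ContinuousLinearMap.snd ℝ ℝ ℝ) y := by
    have := (hasFDerivAt_snd (𝕜 := ℝ) (p := y)).mul (hasFDerivAt_snd (𝕜 := ℝ) (p := y))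
    simp only [two_mul, add_smul]
    refine this.congr_of_eventuallyEq (Filter.Eventually.of_forall fun z => ?_)
    simp [sq]
  exact HasFDerivAt.prodMk (hasFDerivAt_fst (𝕜 := ℝ) (p := y)) h2

lemma Pd.comp_Lm {f : ℝ × ℝ → ℝ} (hf : ContDiff ℝ ∞ f) (v : ℝ × ℝ) :
    Pd v (f ∘ Lm) = (Pd (Lm v) f) ∘ Lm := by
  funext y
  have h1 : HasFDerivAt f (fderiv ℝ f (Lm y)) (Lm y) :=
    ((hf.differentiable one_le_infty) (Lm y)).hasFDerivAt
  have h2 : HasFDerivAt (f ∘ Lm) ((fderiv ℝ f (Lm y)).comp Lm) y :=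
    h1.comp y Lm.hasFDerivAt
  show fderiv ℝ (f ∘ Lm) y v = _
  rw [h2.fderiv]
  rfl

lemma Pd.e1_comp_Sq {f : ℝ × ℝ → ℝ} (hf : ContDiff ℝ ∞ f) :
    Pd e1 (f ∘ Sq) = (Pd e1 f) ∘ Sq := by
  funext y
  have h1 : HasFDerivAt f (fderiv ℝ f (Sq y)) (Sq y) :=
    ((hf.differentiable one_le_infty) (Sq y)).hasFDerivAt
  have h2 : HasFDerivAt (f ∘ Sq) ((fderiv ℝ f (Sq y)).comp (SqD y)) y :=
    h1.comp y (hasFDerivAt_Sq y)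
  show fderiv ℝ (f ∘ Sq) y e1 = _
  rw [h2.fderiv]
  have : SqD y e1 = e1 := by simp [SqD, e1]
  simp only [ContinuousLinearMap.coe_comp', Function.comp_apply, this]
  rfl

lemma Pd.e2_comp_Sq {f : ℝ × ℝ → ℝ} (hf : ContDiff ℝ ∞ f) (y : ℝ × ℝ) :
    Pd e2 (f ∘ Sq) y = 2 * y.2 * Pd e2 f (Sq y) := by
  have h1 : HasFDerivAt f (fderiv ℝ f (Sq y)) (Sq y) :=
    ((hf.differentiable one_le_infty) (Sq y)).hasFDerivAt
  have h2 : HasFDerivAt (f ∘ Sq) ((fderiv ℝ f (Sq y)).comp (SqD y)) y :=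
    h1.comp y (hasFDerivAt_Sq y)
  show fderiv ℝ (f ∘ Sq) y e2 = _
  rw [h2.fderiv]
  have hv : SqD y e2 = (2 * y.2) • e2 := by simp [SqD, e2]
  simp only [ContinuousLinearMap.coe_comp', Function.comp_apply, hv, map_smul]
  show (2 * y.2) * fderiv ℝ f (Sq y) e2 = _
  rfl

lemma Pd.apply_add {f : ℝ × ℝ → ℝ} (v w : ℝ × ℝ) (y : ℝ × ℝ) :
    Pd (v + w) f y = Pd v f y + Pd w f y := map_add _ v w

lemma Pd.sum_mul {ι : Type} (v : ℝ × ℝ) (s : Finset ι) (C : ι → ℝ) (F : ι → ℝ × ℝ → ℝ)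
    (hF : ∀ i ∈ s, ContDiff ℝ ∞ (F i)) :
    Pd v (fun y => ∑ i ∈ s, C i * F i y) = fun y => ∑ i ∈ s, C i * Pd v (F i) y := by
  funext y
  have hdiff : ∀ i ∈ s, DifferentiableAt ℝ (fun z => C i * F i z) y := fun i hi =>
    (differentiableAt_const _).mul (((hF i hi).differentiable one_le_infty) y)
  show fderiv ℝ (fun z => ∑ i ∈ s, C i * F i z) y v = _
  rw [fderiv_fun_sum hdiff]
  rw [ContinuousLinearMap.sum_apply]
  refine Finset.sum_congr rfl fun i hi => ?_
  rw [fderiv_const_mul (((hF i hi).differentiable one_le_infty) y) (C i)]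
  rfl

lemma Pd.comm_iter {g : ℝ × ℝ → ℝ} (hg : ContDiff ℝ ∞ g) (i : ℕ) :
    Pd e2 ((Pd e1)^[i] g) = (Pd e1)^[i] (Pd e2 g) := by
  induction i generalizing g with
  | zero => rfl
  | succ i ih =>
    rw [Function.iterate_succ_apply, Function.iterate_succ_apply,
      ih (Pd.contDiff hg e1), Pd.comm hg e1 e2]

/-- binomial expansion of iterates of the direction `e1 + e2` -/
lemma q_iter {f : ℝ × ℝ → ℝ} (hf : ContDiff ℝ ∞ f) (q : ℕ) :
    (Pd (e1 + e2))^[q] f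
      = fun y => ∑ i ∈ Finset.range (q + 1),
          (q.choose i : ℝ) * (Pd e1)^[i] ((Pd e2)^[q - i] f) y := by
  induction q with
  | zero => simp
  | succ q ih =>
    rw [Function.iterate_succ_apply', ih]
    have hB : ∀ i ∈ Finset.range (q + 1), ContDiff ℝ ∞ ((Pd e1)^[i] ((Pd e2)^[q - i] f)) :=
      fun i _ => Pd.iter_contDiff (Pd.iter_contDiff hf e2 _) e1 i
    rw [Pd.sum_mul (e1 + e2) _ _ _ hB]
    funext y
    have expand : ∀ i ∈ Finset.range (q + 1),
        (q.choose i : ℝ) * Pd (e1 + e2) ((Pd e1)^[i] ((Pd e2)^[q - i] f)) y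
        = (q.choose i : ℝ) * (Pd e1)^[i + 1] ((Pd e2)^[q - i] f) y
          + (q.choose i : ℝ) * (Pd e1)^[i] ((Pd e2)^[(q - i) + 1] f) y := by
      intro i hi
      rw [Pd.apply_add]
      rw [mul_add]
      congr 2
      · rw [Function.iterate_succ_apply']
      · rw [Pd.comm_iter (Pd.iter_contDiff hf e2 _) i, Function.iterate_succ_apply']
    rw [Finset.sum_congr rfl expand, Finset.sum_add_distrib]
    -- now Pascal recombination
    have h1 : ∑ i ∈ Finset.range (q + 1),
        (q.choose i : ℝ) * (Pd e1)^[i] ((Pd e2)^[(q - i) + 1] f) y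
        = ∑ i ∈ Finset.range (q + 1),
            (q.choose (i + 1) : ℝ) * (Pd e1)^[i + 1] ((Pd e2)^[q - i] f) y
          + (Pd e2)^[q + 1] f y := by
      rw [Finset.sum_range_succ' (fun i =>
        (q.choose i : ℝ) * (Pd e1)^[i] ((Pd e2)^[(q - i) + 1] f) y) q]
      simp only [Nat.choose_zero_right, Nat.cast_one, one_mul, Nat.sub_zero,
        Function.iterate_zero_apply]
      congr 1
      have : ∀ i ∈ Finset.range q,
          (q.choose (i + 1) : ℝ) * (Pd e1)^[i + 1] ((Pd e2)^[(q - (i + 1)) + 1] f) y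
          = (q.choose (i + 1) : ℝ) * (Pd e1)^[i + 1] ((Pd e2)^[q - i] f) y := by
        intro i hi
        rw [Finset.mem_range] at hi
        have hqi : q - (i + 1) + 1 = q - i := by omega
        rw [hqi]
      rw [Finset.sum_congr rfl this]
      rw [Finset.sum_range_succ (fun i =>
        (q.choose (i + 1) : ℝ) * (Pd e1)^[i + 1] ((Pd e2)^[q - i] f) y) q]
      simp [Nat.choose_succ_self]
    rw [h1]
    rw [Finset.sum_range_succ' (fun i =>
      ((q + 1).choose i : ℝ) * (Pd e1)^[i] ((Pd e2)^[q + 1 - i] f) y) (q + 1)]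
    simp only [Nat.choose_zero_right, Nat.cast_one, one_mul, Nat.sub_zero,
      Function.iterate_zero_apply]
    rw [← add_assoc, ← Finset.sum_add_distrib]
    congr 1
    refine Finset.sum_congr rfl fun i hi => ?_
    have hc : ((q + 1).choose (i + 1) : ℝ) = (q.choose i : ℝ) + (q.choose (i + 1) : ℝ) := by
      rw [Nat.choose_succ_succ]
      push_cast
      ring
    have he : q + 1 - (i + 1) = q - i := by omega
    rw [he, hc, add_mul]

lemma Pd.iter_sum_mul {ι : Type} (v : ℝ × ℝ) (k : ℕ) (s : Finset ι) (C : ι → ℝ)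
    (F : ι → ℝ × ℝ → ℝ) (hF : ∀ i ∈ s, ContDiff ℝ ∞ (F i)) :
    (Pd v)^[k] (fun y => ∑ i ∈ s, C i * F i y)
      = fun y => ∑ i ∈ s, C i * (Pd v)^[k] (F i) y := by
  induction k generalizing F with
  | zero => rfl
  | succ k ih =>
    rw [Function.iterate_succ_apply, Pd.sum_mul v s C F hF,
      ih (fun i => Pd v (F i)) (fun i hi => Pd.contDiff (hF i hi) v)]
    funext y
    refine Finset.sum_congr rfl fun i _ => ?_
    rw [← Function.iterate_succ_apply]

lemma Pd.e2_comp_Lm {f : ℝ × ℝ → ℝ} (hf : ContDiff ℝ ∞ f) :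
    Pd e2 (f ∘ Lm) = (Pd (e1 + e2) f) ∘ Lm := by
  rw [← Lm_e2]; exact Pd.comp_Lm hf e2

lemma Pd.e1_comp_Lm {f : ℝ × ℝ → ℝ} (hf : ContDiff ℝ ∞ f) :
    Pd e1 (f ∘ Lm) = (Pd e1 f) ∘ Lm := by
  have := Pd.comp_Lm hf e1
  rwa [Lm_e1] at this

lemma iter_e2_comp_Lm {u : ℝ × ℝ → ℝ} (hu : ContDiff ℝ ∞ u) (q : ℕ) :
    (Pd e2)^[q] (u ∘ Lm) = ((Pd (e1 + e2))^[q] u) ∘ Lm := by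
  induction q with
  | zero => rfl
  | succ q ih =>
    rw [Function.iterate_succ_apply', ih,
      Pd.e2_comp_Lm (Pd.iter_contDiff hu _ q), ← Function.iterate_succ_apply' (Pd (e1 + e2)) q u]

lemma iter_e1_comp_Lm {K : ℝ × ℝ → ℝ} (hK : ContDiff ℝ ∞ K) (j : ℕ) :
    (Pd e1)^[j] (K ∘ Lm) = ((Pd e1)^[j] K) ∘ Lm := by
  induction j generalizing K with
  | zero => rfl
  | succ j ih =>
    rw [Function.iterate_succ_apply, Pd.e1_comp_Lm hK,
      ih (Pd.contDiff hK e1), ← Function.iterate_succ_apply (Pd e1) j K]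

section relations

variable {u : ℝ × ℝ → ℝ} {x₀ : ℝ × ℝ}

lemma relation (hu : ContDiff ℝ ∞ u) (hL : Lm x₀ = x₀) (hinv : (u ∘ Lm) =ᶠ[nhds x₀] u)
    (j q : ℕ) :
    ∑ i ∈ Finset.range (q + 1),
        (q.choose i : ℝ) * (Pd e1)^[j + i] ((Pd e2)^[q - i] u) x₀
      = (Pd e1)^[j] ((Pd e2)^[q] u) x₀ := by
  have key : (Pd e1)^[j] ((Pd e2)^[q] (u ∘ Lm)) x₀ = (Pd e1)^[j] ((Pd e2)^[q] u) x₀ :=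
    (Pd.iter_congr_nhds (Pd.iter_congr_nhds hinv e2 q) e1 j).self_of_nhds
  rw [iter_e2_comp_Lm hu q, iter_e1_comp_Lm (Pd.iter_contDiff hu _ q) j] at key
  rw [← key]
  show _ = ((Pd e1)^[j] ((Pd (e1 + e2))^[q] u)) (Lm x₀)
  rw [hL, q_iter hu q,
    Pd.iter_sum_mul e1 j _ _ _ (fun i _ => Pd.iter_contDiff (Pd.iter_contDiff hu e2 _) e1 i)]
  refine Finset.sum_congr rfl fun i _ => ?_
  rw [Function.iterate_add_apply]

lemma mixed_vanish (hu : ContDiff ℝ ∞ u) (hL : Lm x₀ = x₀)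
    (hinv : (u ∘ Lm) =ᶠ[nhds x₀] u) :
    ∀ n j : ℕ, (Pd e1)^[j + 1] ((Pd e2)^[n] u) x₀ = 0 := by
  intro n
  induction n using Nat.strong_induction_on with
  | _ n IH =>
    intro j
    have rel := relation hu hL hinv j (n + 1)
    rw [Finset.sum_range_succ' (fun i =>
      ((n + 1).choose i : ℝ) * (Pd e1)^[j + i] ((Pd e2)^[n + 1 - i] u) x₀) (n + 1)] at rel
    simp only [Nat.choose_zero_right, Nat.cast_one, one_mul, Nat.sub_zero, Nat.add_zero] at rel
    -- rel : ∑ i ∈ range (n+1), C(n+1, i+1) * P1^[j+(i+1)] P2^[n+1-(i+1)] u x₀ + P1^[j] P2^[n+1] u x₀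
    --       = P1^[j] P2^[n+1] u x₀
    have hsum : ∑ i ∈ Finset.range (n + 1),
        ((n + 1).choose (i + 1) : ℝ) * (Pd e1)^[j + (i + 1)] ((Pd e2)^[n + 1 - (i + 1)] u) x₀
        = 0 := by linarith
    have hz : ∀ i ∈ Finset.range (n + 1), i ≠ 0 →
        ((n + 1).choose (i + 1) : ℝ) * (Pd e1)^[j + (i + 1)] ((Pd e2)^[n + 1 - (i + 1)] u) x₀
          = 0 := by
      intro i hi hne
      rw [Finset.mem_range] at hi
      have h1 : n + 1 - (i + 1) < n := by omega
      have h2 : j + (i + 1) = (j + i) + 1 := by omega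
      rw [h2, IH _ h1 (j + i), mul_zero]
    rw [Finset.sum_eq_single_of_mem 0 (by simp) (fun i hi hne => hz i hi hne)] at hsum
    simp only [Nat.choose_one_right, zero_add, Nat.add_sub_cancel] at hsum
    exact (mul_eq_zero.mp hsum).resolve_left (by positivity)
end relations

/-- coefficients in the formula for iterated `t`-derivatives of `f(τ, t²)` -/
def cc : ℕ → ℕ → ℕ
  | 0, 0 => 1
  | 0, _ + 1 => 0
  | _ + 1, 0 => 0
  | q + 1, j + 1 => (2 * (j + 1) - q) * cc q (j + 1) + 2 * cc q j

lemma cc_zero_of_lt : ∀ q j, 2 * j < q → cc q j = 0 := by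
  intro q
  induction q with
  | zero => intro j h; omega
  | succ q ih =>
    intro j h
    match j with
    | 0 => rfl
    | j + 1 =>
      have h1 : 2 * (j + 1) - q = 0 := by omega
      have h2 : 2 * j < q := by omega
      show (2 * (j + 1) - q) * cc q (j + 1) + 2 * cc q j = 0
      rw [h1, ih j h2]
      simp

lemma cc_zero_of_gt : ∀ q j, q < j → cc q j = 0 := by
  intro q
  induction q with
  | zero => intro j h; match j, h with | j + 1, _ => rfl
  | succ q ih =>
    intro j h
    match j, h with
    | j + 1, h =>
      show (2 * (j + 1) - q) * cc q (j + 1) + 2 * cc q j = 0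
      rw [ih (j + 1) (by omega), ih j (by omega)]
      simp

lemma cc_diag_pos : ∀ n, 0 < cc (2 * n) n := by
  intro n
  induction n with
  | zero => simp [cc]
  | succ n ih =>
    have e1' : 2 * (n + 1) = (2 * n + 1) + 1 := by ring
    rw [e1']
    show 0 < (2 * (n + 1) - (2 * n + 1)) * cc (2 * n + 1) (n + 1) + 2 * cc (2 * n + 1) n
    have h2 : 2 * (n + 1) - (2 * n + 1) = 1 := by omega
    have h3 : cc (2 * n + 1) (n + 1) = 2 * cc (2 * n) (n + 1) + 2 * cc (2 * n) n := by
      show (2 * (n + 1) - 2 * n) * cc (2 * n) (n + 1) + 2 * cc (2 * n) n = _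
      have h4 : 2 * (n + 1) - 2 * n = 2 := by omega
      rw [h4]
    rw [h2, h3, one_mul]
    omega

/-- main bridge formula: iterated `e2`-derivatives of `K ∘ Sq` -/
lemma stepC {K : ℝ × ℝ → ℝ} (hK : ContDiff ℝ ∞ K) (q : ℕ) :
    (Pd e2)^[q] (K ∘ Sq)
      = fun y => ∑ j ∈ Finset.range (q + 1),
          (cc q j : ℝ) * y.2 ^ (2 * j - q) * (Pd e2)^[j] K (Sq y) := by
  induction q with
  | zero =>
    funext y
    simp [cc]
  | succ q ih =>
    rw [Function.iterate_succ_apply', ih]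
    funext y
    have hW : ∀ j : ℕ, ContDiff ℝ ∞ ((Pd e2)^[j] K) := fun j => Pd.iter_contDiff hK e2 j
    have hterm : ∀ j : ℕ, DifferentiableAt ℝ
        (fun z : ℝ × ℝ => (cc q j : ℝ) * z.2 ^ (2 * j - q) * (Pd e2)^[j] K (Sq z)) y := by
      intro j
      exact (((differentiableAt_const _).mul
        ((differentiableAt_snd).pow _)).mul
        ((((hW j).differentiable one_le_infty).differentiableAt).comp y
          ((contDiff_Sq.differentiable one_le_infty).differentiableAt)))
    show fderiv ℝ (fun z => ∑ j ∈ Finset.range (q + 1),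
        (cc q j : ℝ) * z.2 ^ (2 * j - q) * (Pd e2)^[j] K (Sq z)) y e2 = _
    rw [fderiv_fun_sum fun j _ => hterm j, ContinuousLinearMap.sum_apply]
    have hder : ∀ j ∈ Finset.range (q + 1),
        fderiv ℝ (fun z : ℝ × ℝ => (cc q j : ℝ) * z.2 ^ (2 * j - q)
            * (Pd e2)^[j] K (Sq z)) y e2
        = (cc q j : ℝ) * ((2 * j - q : ℕ) : ℝ) * y.2 ^ (2 * j - q - 1)
              * (Pd e2)^[j] K (Sq y)
          + (cc q j : ℝ) * 2 * y.2 ^ (2 * j - q + 1) * (Pd e2)^[j + 1] K (Sq y) := by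
      intro j _
      have hA : DifferentiableAt ℝ (fun z : ℝ × ℝ => (cc q j : ℝ) * z.2 ^ (2 * j - q)) y :=
        (differentiableAt_const _).mul ((differentiableAt_snd).pow _)
      have hB : DifferentiableAt ℝ (fun z : ℝ × ℝ => (Pd e2)^[j] K (Sq z)) y :=
        (((hW j).differentiable one_le_infty).differentiableAt).comp y
          ((contDiff_Sq.differentiable one_le_infty).differentiableAt)
      rw [fderiv_fun_mul hA hB]
      rw [ContinuousLinearMap.add_apply, ContinuousLinearMap.smul_apply,
        ContinuousLinearMap.smul_apply]
      have hBd : fderiv ℝ (fun z : ℝ × ℝ => (Pd e2)^[j] K (Sq z)) y e2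
          = 2 * y.2 * (Pd e2)^[j + 1] K (Sq y) := by
        have h := Pd.e2_comp_Sq (hW j) y
        rw [Function.iterate_succ_apply' (Pd e2) j K]
        exact h
      have hAd : fderiv ℝ (fun z : ℝ × ℝ => (cc q j : ℝ) * z.2 ^ (2 * j - q)) y e2
          = (cc q j : ℝ) * (((2 * j - q : ℕ) : ℝ) * y.2 ^ (2 * j - q - 1)) := by
        rw [fderiv_const_mul ((differentiableAt_snd).fun_pow _) ((cc q j : ℝ))]
        have hp : HasFDerivAt (fun z : ℝ × ℝ => z.2 ^ (2 * j - q))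
            ((((2 * j - q : ℕ) : ℝ) * y.2 ^ (2 * j - q - 1)) •
              ContinuousLinearMap.snd ℝ ℝ ℝ) y :=
          (hasDerivAt_pow (2 * j - q) y.2).comp_hasFDerivAt y (hasFDerivAt_snd (𝕜 := ℝ))
        rw [ContinuousLinearMap.smul_apply, hp.fderiv]
        simp [e2]
      rw [hBd, hAd]
      show (cc q j : ℝ) * y.2 ^ (2 * j - q) * (2 * y.2 * (Pd e2)^[j + 1] K (Sq y))
          + (Pd e2)^[j] K (Sq y) * ((cc q j : ℝ) * (((2 * j - q : ℕ) : ℝ)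
            * y.2 ^ (2 * j - q - 1))) = _
      ring
    rw [Finset.sum_congr rfl hder, Finset.sum_add_distrib]
    -- recombine
    rw [Finset.sum_range_succ' (fun j => (cc (q + 1) j : ℝ)
      * y.2 ^ (2 * j - (q + 1)) * (Pd e2)^[j] K (Sq y)) (q + 1)]
    have hc0 : cc (q + 1) 0 = 0 := rfl
    rw [hc0]
    simp only [Nat.cast_zero, zero_mul, add_zero]
    have hsplit : ∀ j ∈ Finset.range (q + 1),
        (cc (q + 1) (j + 1) : ℝ) * y.2 ^ (2 * (j + 1) - (q + 1)) * (Pd e2)^[j + 1] K (Sq y)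
        = ((2 * (j + 1) - q : ℕ) : ℝ) * (cc q (j + 1) : ℝ)
              * y.2 ^ (2 * (j + 1) - (q + 1)) * (Pd e2)^[j + 1] K (Sq y)
          + 2 * (cc q j : ℝ) * y.2 ^ (2 * (j + 1) - (q + 1)) * (Pd e2)^[j + 1] K (Sq y) := by
      intro j _
      have hrec : cc (q + 1) (j + 1) = (2 * (j + 1) - q) * cc q (j + 1) + 2 * cc q j := rfl
      rw [hrec]
      push_cast
      ring
    rw [Finset.sum_congr rfl hsplit, Finset.sum_add_distrib]
    have hBB : ∑ j ∈ Finset.range (q + 1),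
        (cc q j : ℝ) * 2 * y.2 ^ (2 * j - q + 1) * (Pd e2)^[j + 1] K (Sq y)
        = ∑ j ∈ Finset.range (q + 1),
            2 * (cc q j : ℝ) * y.2 ^ (2 * (j + 1) - (q + 1)) * (Pd e2)^[j + 1] K (Sq y) := by
      refine Finset.sum_congr rfl fun j _ => ?_
      by_cases hq : q ≤ 2 * j
      · have hexp : 2 * j - q + 1 = 2 * (j + 1) - (q + 1) := by omega
        rw [hexp]
        ring
      · have h0 : cc q j = 0 := cc_zero_of_lt q j (by omega)
        rw [h0]
        simp
    have hAA : ∑ j ∈ Finset.range (q + 1),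
        (cc q j : ℝ) * ((2 * j - q : ℕ) : ℝ) * y.2 ^ (2 * j - q - 1) * (Pd e2)^[j] K (Sq y)
        = ∑ j ∈ Finset.range (q + 1),
            ((2 * (j + 1) - q : ℕ) : ℝ) * (cc q (j + 1) : ℝ)
              * y.2 ^ (2 * (j + 1) - (q + 1)) * (Pd e2)^[j + 1] K (Sq y) := by
      rw [Finset.sum_range_succ' (fun j => (cc q j : ℝ) * ((2 * j - q : ℕ) : ℝ)
        * y.2 ^ (2 * j - q - 1) * (Pd e2)^[j] K (Sq y)) q]
      rw [Finset.sum_range_succ (fun j => ((2 * (j + 1) - q : ℕ) : ℝ) * (cc q (j + 1) : ℝ)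
        * y.2 ^ (2 * (j + 1) - (q + 1)) * (Pd e2)^[j + 1] K (Sq y)) q]
      have hz1 : (cc q 0 : ℝ) * ((2 * 0 - q : ℕ) : ℝ) * y.2 ^ (2 * 0 - q - 1)
          * (Pd e2)^[0] K (Sq y) = 0 := by
        have : (2 * 0 - q : ℕ) = 0 := by omega
        rw [this]
        simp
      have hz2 : ((2 * (q + 1) - q : ℕ) : ℝ) * (cc q (q + 1) : ℝ)
          * y.2 ^ (2 * (q + 1) - (q + 1)) * (Pd e2)^[q + 1] K (Sq y) = 0 := by
        rw [cc_zero_of_gt q (q + 1) (lt_add_one q)]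
        simp
      rw [hz1, hz2, add_zero, add_zero]
      refine Finset.sum_congr rfl fun j _ => ?_
      have hexp : 2 * (j + 1) - q - 1 = 2 * (j + 1) - (q + 1) := by omega
      rw [hexp]
      ring
    rw [hAA, hBB]

/-- `Pd e1` iterates pass through the bridge sums -/
lemma stepD (m : ℕ) (W : ℕ → ℝ × ℝ → ℝ) (hW : ∀ j, ContDiff ℝ ∞ (W j)) (C : ℕ → ℝ)
    (a : ℕ → ℕ) (N : ℕ) :
    (Pd e1)^[m] (fun y => ∑ j ∈ Finset.range N, C j * y.2 ^ (a j) * W j (Sq y))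
      = fun y => ∑ j ∈ Finset.range N, C j * y.2 ^ (a j) * (Pd e1)^[m] (W j) (Sq y) := by
  induction m generalizing W with
  | zero => rfl
  | succ m ih =>
    rw [Function.iterate_succ_apply]
    have hstep : Pd e1 (fun y => ∑ j ∈ Finset.range N, C j * y.2 ^ (a j) * W j (Sq y))
        = fun y => ∑ j ∈ Finset.range N, C j * y.2 ^ (a j) * Pd e1 (W j) (Sq y) := by
      funext y
      have hterm : ∀ j : ℕ, DifferentiableAt ℝ
          (fun z : ℝ × ℝ => C j * z.2 ^ (a j) * W j (Sq z)) y :=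
        fun j => (((differentiableAt_const _).mul ((differentiableAt_snd).pow _)).mul
          ((((hW j).differentiable one_le_infty).differentiableAt).comp y
            ((contDiff_Sq.differentiable one_le_infty).differentiableAt)))
      show fderiv ℝ (fun z => ∑ j ∈ Finset.range N,
          C j * z.2 ^ (a j) * W j (Sq z)) y e1 = _
      rw [fderiv_fun_sum fun j _ => hterm j, ContinuousLinearMap.sum_apply]
      refine Finset.sum_congr rfl fun j _ => ?_
      have hA : DifferentiableAt ℝ (fun z : ℝ × ℝ => C j * z.2 ^ (a j)) y :=
        (differentiableAt_const _).mul ((differentiableAt_snd).pow _)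
      have hB : DifferentiableAt ℝ (fun z : ℝ × ℝ => W j (Sq z)) y :=
        (((hW j).differentiable one_le_infty).differentiableAt).comp y
          ((contDiff_Sq.differentiable one_le_infty).differentiableAt)
      rw [fderiv_fun_mul hA hB]
      rw [ContinuousLinearMap.add_apply, ContinuousLinearMap.smul_apply,
        ContinuousLinearMap.smul_apply]
      have hBd : fderiv ℝ (fun z : ℝ × ℝ => W j (Sq z)) y e1 = Pd e1 (W j) (Sq y) := by
        have h := congrFun (Pd.e1_comp_Sq (hW j)) y
        exact h
      have hAd : fderiv ℝ (fun z : ℝ × ℝ => C j * z.2 ^ (a j)) y e1 = 0 := by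
        rw [fderiv_const_mul ((differentiableAt_snd).fun_pow _) (C j)]
        have hp : HasFDerivAt (fun z : ℝ × ℝ => z.2 ^ (a j))
            ((((a j : ℕ) : ℝ) * y.2 ^ (a j - 1)) • ContinuousLinearMap.snd ℝ ℝ ℝ) y :=
          (hasDerivAt_pow (a j) y.2).comp_hasFDerivAt y (hasFDerivAt_snd (𝕜 := ℝ))
        rw [ContinuousLinearMap.smul_apply, hp.fderiv]
        simp [e1]
      rw [hBd, hAd]
      show C j * y.2 ^ (a j) * Pd e1 (W j) (Sq y) + W j (Sq y) * 0 = _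
      ring
    rw [hstep, ih (fun j => Pd e1 (W j)) (fun j => Pd.contDiff (hW j) e1)]
    funext y
    refine Finset.sum_congr rfl fun j _ => ?_
    rw [← Function.iterate_succ_apply (Pd e1) m (W j)]

lemma natCast_le_infty (k : ℕ) : (k : WithTop ℕ∞) ≤ ∞ := by
  exact_mod_cast (le_top : (k : ℕ∞) ≤ ⊤)

/-- peel off the last direction of an iterated derivative -/
lemma peel {f : ℝ × ℝ → ℝ} (hf : ContDiff ℝ ∞ f) (k : ℕ) (x : ℝ × ℝ)
    (v : Fin (k + 1) → ℝ × ℝ) :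
    iteratedFDeriv ℝ (k + 1) f x v
      = iteratedFDeriv ℝ k (Pd (v (Fin.last k)) f) x (Fin.init v) := by
  rw [iteratedFDeriv_succ_apply_right]
  have hfd : ContDiff ℝ ∞ (fderiv ℝ f) := hf.fderiv_right infty_add_one
  have hcomp := (ContinuousLinearMap.apply ℝ ℝ (v (Fin.last k))).iteratedFDeriv_comp_left
    (hfd.contDiffAt (x := x)) (natCast_le_infty k)
  have heq : Pd (v (Fin.last k)) f
      = (ContinuousLinearMap.apply ℝ ℝ (v (Fin.last k))) ∘ (fderiv ℝ f) := rfl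
  rw [heq, hcomp]
  rfl

lemma pattern_e1 {f : ℝ × ℝ → ℝ} (hf : ContDiff ℝ ∞ f) (x : ℝ × ℝ) (m : ℕ) :
    iteratedFDeriv ℝ m f x (fun _ => e1) = (Pd e1)^[m] f x := by
  induction m generalizing f with
  | zero => exact iteratedFDeriv_zero_apply _
  | succ m ih =>
    rw [peel hf m x (fun _ => e1)]
    have h1 : iteratedFDeriv ℝ m (Pd ((fun _ : Fin (m + 1) => e1) (Fin.last m)) f) x
        (Fin.init fun _ => e1) = iteratedFDeriv ℝ m (Pd e1 f) x (fun _ => e1) := rfl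
    rw [h1, ih (Pd.contDiff hf e1), ← Function.iterate_succ_apply (Pd e1) m f]

lemma pattern_eq {f : ℝ × ℝ → ℝ} (hf : ContDiff ℝ ∞ f) (x : ℝ × ℝ) (m n : ℕ) :
    iteratedFDeriv ℝ (m + n) f x
        (fun i : Fin (m + n) => if (i : ℕ) < m then e1 else e2)
      = (Pd e1)^[m] ((Pd e2)^[n] f) x := by
  induction n generalizing f with
  | zero =>
    have hv : (fun i : Fin (m + 0) => if (i : ℕ) < m then e1 else e2)
        = fun _ : Fin (m + 0) => e1 := by
      funext i
      exact if_pos (by omega)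
    rw [hv]
    exact pattern_e1 hf x m
  | succ n ih =>
    show iteratedFDeriv ℝ ((m + n) + 1) f x
        (fun i : Fin ((m + n) + 1) => if (i : ℕ) < m then e1 else e2) = _
    rw [peel hf (m + n) x _]
    have hlast : (if ((Fin.last (m + n) : Fin (m + n + 1)) : ℕ) < m then e1 else e2) = e2 := by
      rw [Fin.val_last]
      exact if_neg (by omega)
    have hinit : (Fin.init fun i : Fin ((m + n) + 1) => if (i : ℕ) < m then e1 else e2)
        = fun i : Fin (m + n) => if (i : ℕ) < m then e1 else e2 := by
      funext i
      simp [Fin.init]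
    rw [hinit]
    have h2 : Pd (if ((Fin.last (m + n) : Fin (m + n + 1)) : ℕ) < m then e1 else e2) f
        = Pd e2 f := by rw [hlast]
    rw [h2, ih (Pd.contDiff hf e2), ← Function.iterate_succ_apply (Pd e2) n f]

lemma iteratedFDeriv_congr_nhds {f g : ℝ × ℝ → ℝ} {x : ℝ × ℝ} (h : f =ᶠ[nhds x] g) (k : ℕ) :
    iteratedFDeriv ℝ k f x = iteratedFDeriv ℝ k g x := by
  rw [← iteratedFDerivWithin_univ, ← iteratedFDerivWithin_univ]
  exact Filter.EventuallyEq.iteratedFDerivWithin_eq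
    (by rwa [nhdsWithin_univ]) h.eq_of_nhds k

end S6
end

open S6

/-- Let `G` be `C^∞` on `(a,b) × (−δ,δ)` and invariant under
`F(τ,h) = (τ + √h, h)`: `G(τ + √h, h) = G(τ,h)` whenever `τ, τ + √h ∈ (a,b)` and
`h ∈ [0,δ)`. Then every mixed partial derivative of `G` involving at least one
`τ`-differentiation vanishes on the boundary interval `(a,b) × {0}`:
`∂^{m+n}G/∂τ^m ∂h^n (τ₀,0) = 0` for all `τ₀ ∈ (a,b)`, `m ≥ 1`, `n ≥ 0`.
(The derivative is expressed as the `(m+n)`-th total derivative evaluated on `m`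
copies of the direction `(1,0)` and `n` copies of `(0,1)`.) -/
theorem statement6 (a b δ : ℝ) (hab : a < b) (hδ : 0 < δ)
    (G : ℝ × ℝ → ℝ)
    (hG : ContDiffOn ℝ (⊤ : ℕ∞) G (Set.Ioo a b ×ˢ Set.Ioo (-δ) δ))
    (hinv : ∀ τ ∈ Set.Ioo a b, ∀ h ∈ Set.Ico (0:ℝ) δ,
      τ + Real.sqrt h ∈ Set.Ioo a b → G (τ + Real.sqrt h, h) = G (τ, h)) :
    ∀ τ₀ ∈ Set.Ioo a b, ∀ m n : ℕ, 1 ≤ m →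
      iteratedFDeriv ℝ (m + n) G (τ₀, 0)
        (fun i : Fin (m + n) =>
          if (i : ℕ) < m then ((1:ℝ), (0:ℝ)) else ((0:ℝ), (1:ℝ))) = 0 := by
  intro τ₀ hτ₀ m n hm
  obtain ⟨m', rfl⟩ : ∃ m', m = m' + 1 := ⟨m - 1, by omega⟩
  set x₀ : ℝ × ℝ := (τ₀, 0) with hx₀
  have hUopen : IsOpen (Set.Ioo a b ×ˢ Set.Ioo (-δ) δ) := isOpen_Ioo.prod isOpen_Ioo
  have hx₀U : x₀ ∈ Set.Ioo a b ×ˢ Set.Ioo (-δ) δ :=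
    ⟨hτ₀, ⟨neg_lt_zero.2 hδ, hδ⟩⟩
  obtain ⟨R, hRpos, hRsub⟩ := Metric.isOpen_iff.1 hUopen x₀ hx₀U
  -- the cut-off function
  let bump : ContDiffBump x₀ := ⟨R/3, R/2, by positivity, by linarith⟩
  set Gs : ℝ × ℝ → ℝ := fun y => bump y * G y with hGsdef
  have hGsmooth : ContDiff ℝ ∞ Gs := by
    rw [contDiff_iff_contDiffAt]
    intro y
    by_cases hy : y ∈ Metric.ball x₀ R
    · exact (bump.contDiff (n := (⊤ : ℕ∞))).contDiffAt.mul
        ((hG.contDiffAt (hUopen.mem_nhds (hRsub hy))).of_le (by simp))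
    · have hyc : y ∈ (Metric.closedBall x₀ (R/2))ᶜ := by
        intro hycb
        exact hy (Metric.closedBall_subset_ball (by linarith) hycb)
      have hz : ∀ᶠ z in nhds y, Gs z = 0 := by
        filter_upwards [(Metric.isClosed_closedBall (x := x₀)
            (ε := R/2)).isOpen_compl.mem_nhds hyc] with z hzc
        have hb0 : bump z = 0 := bump.zero_of_le_dist
          (le_of_lt (lt_of_not_ge (fun hle => hzc (Metric.mem_closedBall.2 hle))))
        rw [hGsdef]
        simp [hb0]
      exact (contDiffAt_const (c := (0:ℝ))).congr_of_eventuallyEq hz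
  have hagree : ∀ y ∈ Metric.closedBall x₀ (R/3), Gs y = G y := by
    intro y hy
    rw [hGsdef]
    simp [bump.one_of_mem_closedBall hy]
  have hGsG : Gs =ᶠ[nhds x₀] G := by
    filter_upwards [Metric.closedBall_mem_nhds x₀ (by positivity : (0:ℝ) < R/3)] with y hy
    exact hagree y hy
  set u : ℝ × ℝ → ℝ := Gs ∘ Sq with hudef
  have husmooth : ContDiff ℝ ∞ u := hGsmooth.comp contDiff_Sq
  have hLx₀ : Lm x₀ = x₀ := by
    rw [Lm_apply]
    show (τ₀ + 0, (0:ℝ)) = (τ₀, 0)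
    rw [add_zero]
  have hSx₀ : Sq x₀ = x₀ := by
    show (τ₀, (0:ℝ)^2) = (τ₀, 0)
    norm_num
  have hball_sub : Metric.closedBall x₀ (R/3) ⊆ Set.Ioo a b ×ˢ Set.Ioo (-δ) δ := fun z hz =>
    hRsub (lt_of_le_of_lt (Metric.mem_closedBall.1 hz) (by linarith))
  -- invariance of u near x₀
  have huinv : (u ∘ Lm) =ᶠ[nhds x₀] u := by
    have hρpos : (0:ℝ) < min (R/9) 1 := lt_min (by positivity) one_pos
    filter_upwards [Metric.ball_mem_nhds x₀ hρpos] with y hy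
    set ρ := min (R/9) 1 with hρ
    have hρR : ρ ≤ R/9 := min_le_left _ _
    have hρ1 : ρ ≤ 1 := min_le_right _ _
    rw [Metric.mem_ball, Prod.dist_eq, max_lt_iff] at hy
    have h1 : |y.1 - τ₀| < ρ := by
      have h := hy.1
      rwa [Real.dist_eq] at h
    have h2 : |y.2| < ρ := by
      have h := hy.2
      rwa [Real.dist_eq, sub_zero] at h
    have habs1 : |y.1 + y.2 - τ₀| ≤ R/3 := by
      have htri : |y.1 + y.2 - τ₀| ≤ |y.1 - τ₀| + |y.2| := by
        have hre : y.1 + y.2 - τ₀ = (y.1 - τ₀) + y.2 := by ring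
        rw [hre]
        exact abs_add_le _ _
      linarith
    have habs2 : y.2^2 ≤ R/3 := by
      nlinarith [sq_abs y.2, abs_nonneg y.2]
    have hcb1 : ((y.1, y.2^2) : ℝ × ℝ) ∈ Metric.closedBall x₀ (R/3) := by
      rw [Metric.mem_closedBall, Prod.dist_eq, max_le_iff]
      constructor
      · show dist y.1 τ₀ ≤ R/3
        rw [Real.dist_eq]
        linarith
      · show dist (y.2^2) 0 ≤ R/3
        rw [Real.dist_eq, sub_zero, abs_of_nonneg (sq_nonneg _)]
        exact habs2
    have hcb2 : ((y.1 + y.2, y.2^2) : ℝ × ℝ) ∈ Metric.closedBall x₀ (R/3) := by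
      rw [Metric.mem_closedBall, Prod.dist_eq, max_le_iff]
      constructor
      · show dist (y.1 + y.2) τ₀ ≤ R/3
        rw [Real.dist_eq]
        exact habs1
      · show dist (y.2^2) 0 ≤ R/3
        rw [Real.dist_eq, sub_zero, abs_of_nonneg (sq_nonneg _)]
        exact habs2
    have hU1 := hball_sub hcb1
    have hU2 := hball_sub hcb2
    have key : G (y.1 + y.2, y.2^2) = G (y.1, y.2^2) := by
      rcases le_or_gt 0 y.2 with ht | ht
      · have hs : Real.sqrt (y.2^2) = y.2 := Real.sqrt_sq ht
        have h := hinv y.1 hU1.1 (y.2^2) ⟨sq_nonneg _, hU1.2.2⟩ (by rw [hs]; exact hU2.1)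
        rwa [hs] at h
      · have hs : Real.sqrt (y.2^2) = -y.2 := by
          rw [Real.sqrt_sq_eq_abs]
          exact abs_of_neg ht
        have h := hinv (y.1 + y.2) hU2.1 (y.2^2) ⟨sq_nonneg _, hU1.2.2⟩
          (by rw [hs, add_neg_cancel_right]; exact hU1.1)
        rw [hs, add_neg_cancel_right] at h
        exact h.symm
    show u (Lm y) = u y
    calc u (Lm y) = Gs (y.1 + y.2, y.2^2) := rfl
      _ = G (y.1 + y.2, y.2^2) := hagree _ hcb2
      _ = G (y.1, y.2^2) := key
      _ = Gs (y.1, y.2^2) := (hagree _ hcb1).symm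
      _ = u y := rfl
  -- vanishing of all mixed jets of u
  have hv := mixed_vanish husmooth hLx₀ huinv (2*n) m'
  -- bridge between jets of u and jets of Gs
  have hbridge : (Pd e1)^[m'+1] ((Pd e2)^[2*n] u)
      = fun y => ∑ j ∈ Finset.range (2*n+1),
          (cc (2*n) j : ℝ) * y.2 ^ (2*j - 2*n)
            * (Pd e1)^[m'+1] ((Pd e2)^[j] Gs) (Sq y) := by
    rw [hudef, stepC hGsmooth (2*n)]
    exact stepD (m'+1) (fun j => (Pd e2)^[j] Gs)
      (fun j => Pd.iter_contDiff hGsmooth e2 j)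
      (fun j => (cc (2*n) j : ℝ)) (fun j => 2*j - 2*n) (2*n+1)
  have heval : (Pd e1)^[m'+1] ((Pd e2)^[2*n] u) x₀
      = (cc (2*n) n : ℝ) * (Pd e1)^[m'+1] ((Pd e2)^[n] Gs) x₀ := by
    rw [hbridge]
    show ∑ j ∈ Finset.range (2*n+1),
        (cc (2*n) j : ℝ) * x₀.2 ^ (2*j - 2*n)
          * (Pd e1)^[m'+1] ((Pd e2)^[j] Gs) (Sq x₀) = _
    rw [hSx₀]
    have hx2 : x₀.2 = (0:ℝ) := rfl
    rw [hx2]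
    have hzero : ∀ j ∈ Finset.range (2*n+1), j ≠ n →
        (cc (2*n) j : ℝ) * (0:ℝ) ^ (2*j - 2*n)
          * (Pd e1)^[m'+1] ((Pd e2)^[j] Gs) x₀ = 0 := by
      intro j hj hne
      rcases lt_or_gt_of_ne hne with hlt | hgt
      · rw [cc_zero_of_lt (2*n) j (by omega)]
        simp
      · rw [zero_pow (by omega : 2*j - 2*n ≠ 0)]
        ring
    rw [Finset.sum_eq_single_of_mem n (Finset.mem_range.2 (by omega)) hzero]
    have hee : 2*n - 2*n = 0 := by omega
    rw [hee, pow_zero, mul_one]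
  rw [heval] at hv
  have hD := (mul_eq_zero.mp hv).resolve_left
    (Nat.cast_ne_zero.2 (cc_diag_pos n).ne')
  have hGeq := iteratedFDeriv_congr_nhds hGsG.symm (m'+1+n)
  show iteratedFDeriv ℝ (m'+1+n) G x₀
      (fun i : Fin (m'+1+n) => if (i : ℕ) < m'+1 then e1 else e2) = 0
  rw [hGeq, pattern_eq hGsmooth x₀ (m'+1) n]
  exact hD
end

section
/- Let a < b be real numbers and δ > 0. Let G : (a,b)×(−δ,δ) → ℝ be a C^∞-smooth function satisfying the invariance relation G(τ + φ, φ) = G(τ, φ) for all τ with τ, τ + φ ∈ (a,b) and all φ ∈ [0,δ). Then for every τ₀ ∈ (a,b) and all integers m ≥ 1, n ≥ 0, one has ∂^{m+n}G/∂τ^m∂φ^n(τ₀, 0) = 0; that is, the Taylor series of G at each point (τ₀,0) contains only powers of φ. -/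
open Set Filter Topology

noncomputable def S7D (v : ℝ × ℝ) (f : ℝ × ℝ → ℝ) : ℝ × ℝ → ℝ := fun y => fderiv ℝ f y v

variable {s : Set (ℝ × ℝ)} {f g : ℝ × ℝ → ℝ} {x : ℝ × ℝ}

lemma S7D_contDiffOn (hs : IsOpen s) (hf : ContDiffOn ℝ (⊤:ℕ∞) f s) (v : ℝ × ℝ) :
    ContDiffOn ℝ (⊤:ℕ∞) (S7D v f) s :=
  (hf.fderiv_of_isOpen hs (by simp)).clm_apply contDiffOn_const

lemma S7D_iter_contDiffOn (hs : IsOpen s) (hf : ContDiffOn ℝ (⊤:ℕ∞) f s) (v : ℝ × ℝ) (k : ℕ) :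
    ContDiffOn ℝ (⊤:ℕ∞) ((S7D v)^[k] f) s := by
  induction k generalizing f with
  | zero => exact hf
  | succ k ih => rw [Function.iterate_succ_apply]; exact ih (S7D_contDiffOn hs hf v)

lemma S7D_congr (hs : IsOpen s) (h : EqOn f g s) (v : ℝ × ℝ) : EqOn (S7D v f) (S7D v g) s := by
  intro x hx
  have : f =ᶠ[nhds x] g := by filter_upwards [hs.mem_nhds hx] using h
  simp only [S7D, this.fderiv_eq]

lemma S7D_iter_congr (hs : IsOpen s) (h : EqOn f g s) (v : ℝ × ℝ) (k : ℕ) :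
    EqOn ((S7D v)^[k] f) ((S7D v)^[k] g) s := by
  induction k generalizing f g with
  | zero => exact h
  | succ k ih => rw [Function.iterate_succ_apply, Function.iterate_succ_apply]
                 exact ih (S7D_congr hs h v)

lemma S7diffAt (hs : IsOpen s) (hf : ContDiffOn ℝ (⊤:ℕ∞) f s) (hx : x ∈ s) :
    DifferentiableAt ℝ f x :=
  (hf.contDiffAt (hs.mem_nhds hx)).differentiableAt (by norm_cast)

lemma S7D_add_v (v w : ℝ × ℝ) : S7D (v + w) f x = S7D v f x + S7D w f x := by
  simp only [S7D]; exact (fderiv ℝ f x).map_add v w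

lemma S7D_comm (hs : IsOpen s) (hf : ContDiffOn ℝ (⊤:ℕ∞) f s) (hx : x ∈ s) (v w : ℝ × ℝ) :
    S7D v (S7D w f) x = S7D w (S7D v f) x := by
  have hat : ContDiffAt ℝ (⊤:ℕ∞) f x := hf.contDiffAt (hs.mem_nhds hx)
  have hd : DifferentiableAt ℝ (fderiv ℝ f) x :=
    (hat.fderiv_right (m := 1) (by norm_cast)).differentiableAt (by norm_cast)
  have key : ∀ u z : ℝ × ℝ, S7D u (S7D z f) x = fderiv ℝ (fderiv ℝ f) x u z := by
    intro u z
    have h2 : fderiv ℝ (fun y => fderiv ℝ f y z) x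
        = (fderiv ℝ (fderiv ℝ f) x).flip z := by
      have := fderiv_clm_apply (c := fderiv ℝ f) (u := fun _ => z) hd
        (differentiableAt_const z)
      simpa using this
    have hz : S7D z f = fun y => fderiv ℝ f y z := rfl
    show fderiv ℝ (S7D z f) x u = _
    rw [hz, h2, ContinuousLinearMap.flip_apply]
  rw [key v w, key w v]
  have hsymm : IsSymmSndFDerivAt ℝ f x := hat.isSymmSndFDerivAt (by rw [minSmoothness_of_isRCLikeNormedField]; exact WithTop.coe_le_coe.mpr (le_top : (2:ℕ∞) ≤ ⊤))
  exact hsymm v w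

-- push a single S7D through an iterate
lemma S7D_comm_iter (hs : IsOpen s) (hf : ContDiffOn ℝ (⊤:ℕ∞) f s) (hx : x ∈ s)
    (v w : ℝ × ℝ) (k : ℕ) :
    S7D w ((S7D v)^[k] f) x = (S7D v)^[k] (S7D w f) x := by
  induction k generalizing f with
  | zero => rfl
  | succ k ih =>
      rw [Function.iterate_succ_apply, Function.iterate_succ_apply]
      have h1 : S7D w ((S7D v)^[k] (S7D v f)) x = (S7D v)^[k] (S7D w (S7D v f)) x :=
        ih (S7D_contDiffOn hs hf v)
      rw [h1]
      have h2 : EqOn (S7D w (S7D v f)) (S7D v (S7D w f)) s := fun y hy =>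
        S7D_comm hs hf hy w v
      exact S7D_iter_congr hs h2 v k hx

-- derivative of a finite linear combination
lemma S7D_sum (hs : IsOpen s) {N : ℕ} {c : ℕ → ℝ} {F : ℕ → ℝ × ℝ → ℝ}
    (hF : ∀ k, ContDiffOn ℝ (⊤:ℕ∞) (F k) s) (hx : x ∈ s) (v : ℝ × ℝ) :
    S7D v (fun y => ∑ k ∈ Finset.range N, c k * F k y) x
      = ∑ k ∈ Finset.range N, c k * S7D v (F k) x := by
  have hdiff : ∀ k ∈ Finset.range N, DifferentiableAt ℝ (fun y => c k * F k y) x :=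
    fun k _ => (S7diffAt hs (hF k) hx).const_mul (c k)
  show fderiv ℝ (fun y => ∑ k ∈ Finset.range N, c k * F k y) x v = _
  rw [fderiv_fun_sum hdiff]
  rw [ContinuousLinearMap.sum_apply]
  refine Finset.sum_congr rfl fun k _ => ?_
  rw [fderiv_const_mul (S7diffAt hs (hF k) hx) (c k)]
  simp [S7D]

lemma S7D_iter_sum (hs : IsOpen s) {N : ℕ} {c : ℕ → ℝ} {F : ℕ → ℝ × ℝ → ℝ}
    (hF : ∀ k, ContDiffOn ℝ (⊤:ℕ∞) (F k) s) (hx : x ∈ s) (v : ℝ × ℝ) (m : ℕ) :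
    (S7D v)^[m] (fun y => ∑ k ∈ Finset.range N, c k * F k y) x
      = ∑ k ∈ Finset.range N, c k * ((S7D v)^[m] (F k)) x := by
  induction m generalizing F with
  | zero => simp
  | succ m ih =>
      rw [Function.iterate_succ_apply]
      have h1 : EqOn (S7D v (fun y => ∑ k ∈ Finset.range N, c k * F k y))
          (fun y => ∑ k ∈ Finset.range N, c k * S7D v (F k) y) s := fun y hy =>
        S7D_sum hs hF hy v
      rw [S7D_iter_congr hs h1 v m hx]
      rw [ih (fun k => S7D_contDiffOn hs (hF k) v)]
      refine Finset.sum_congr rfl fun k _ => ?_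
      rw [Function.iterate_succ_apply]

lemma S7D_add_fun {h : ℝ × ℝ → ℝ} (hs : IsOpen s) (hg : ContDiffOn ℝ (⊤:ℕ∞) g s)
    (hh : ContDiffOn ℝ (⊤:ℕ∞) h s) (hx : x ∈ s) (u : ℝ × ℝ) :
    S7D u (fun y => g y + h y) x = S7D u g x + S7D u h x := by
  show fderiv ℝ (fun y => g y + h y) x u = _
  rw [fderiv_fun_add (S7diffAt hs hg hx) (S7diffAt hs hh hx)]
  rfl

lemma S7D_iter_add {h : ℝ × ℝ → ℝ} (hs : IsOpen s) (hg : ContDiffOn ℝ (⊤:ℕ∞) g s)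
    (hh : ContDiffOn ℝ (⊤:ℕ∞) h s) (hx : x ∈ s) (u : ℝ × ℝ) (k : ℕ) :
    (S7D u)^[k] (fun y => g y + h y) x = (S7D u)^[k] g x + (S7D u)^[k] h x := by
  induction k generalizing g h with
  | zero => rfl
  | succ k ih =>
      rw [Function.iterate_succ_apply, Function.iterate_succ_apply,
        Function.iterate_succ_apply (S7D u) k h]
      have h1 : EqOn (S7D u (fun y => g y + h y)) (fun y => S7D u g y + S7D u h y) s :=
        fun y hy => S7D_add_fun hs hg hh hy u
      rw [S7D_iter_congr hs h1 u k hx]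
      exact ih (S7D_contDiffOn hs hg u) (S7D_contDiffOn hs hh u)

lemma S7_pascal (n : ℕ) (T : ℕ → ℕ → ℝ) :
    ∑ k ∈ Finset.range (n+1), (n.choose k : ℝ) * (T (k+1) (n-k) + T k (n-k+1))
    = ∑ k ∈ Finset.range (n+2), ((n+1).choose k : ℝ) * T k (n+1-k) := by
  have hR : ∑ k ∈ Finset.range (n+2), ((n+1).choose k : ℝ) * T k (n+1-k)
      = ∑ k ∈ Finset.range (n+1), ((n+1).choose (k+1) : ℝ) * T (k+1) (n-k)
        + T 0 (n+1) := by
    rw [Finset.sum_range_succ']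
    simp [Nat.succ_sub_succ]
  have hsplit : ∑ k ∈ Finset.range (n+1), (n.choose k : ℝ) * (T (k+1) (n-k) + T k (n-k+1))
      = ∑ k ∈ Finset.range (n+1), (n.choose k : ℝ) * T (k+1) (n-k)
        + ∑ k ∈ Finset.range (n+1), (n.choose k : ℝ) * T k (n-k+1) := by
    rw [← Finset.sum_add_distrib]
    exact Finset.sum_congr rfl fun k _ => by ring
  have hA2 : ∑ k ∈ Finset.range (n+1), (n.choose k : ℝ) * T k (n-k+1)
      = ∑ k ∈ Finset.range n, (n.choose (k+1) : ℝ) * T (k+1) (n-k) + T 0 (n+1) := by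
    rw [Finset.sum_range_succ']
    congr 1
    · refine Finset.sum_congr rfl fun k hk => ?_
      have hk' : k + 1 ≤ n := Finset.mem_range.1 hk
      congr 2
      omega
    · simp
  have hpad : ∑ k ∈ Finset.range (n+1), (n.choose (k+1) : ℝ) * T (k+1) (n-k)
      = ∑ k ∈ Finset.range n, (n.choose (k+1) : ℝ) * T (k+1) (n-k) := by
    rw [Finset.sum_range_succ]
    simp
  rw [hsplit, hA2, hR, ← hpad, ← add_assoc, ← Finset.sum_add_distrib]
  congr 1
  refine Finset.sum_congr rfl fun k _ => ?_
  rw [Nat.choose_succ_succ]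
  push_cast
  ring

lemma S7_binom (hs : IsOpen s) (v w : ℝ × ℝ) (n : ℕ)
    (hf : ContDiffOn ℝ (⊤:ℕ∞) f s) (hx : x ∈ s) :
    (S7D (v + w))^[n] f x
      = ∑ k ∈ Finset.range (n+1),
          (n.choose k : ℝ) * ((S7D v)^[k] ((S7D w)^[n-k] f)) x := by
  induction n generalizing f x with
  | zero => simp
  | succ n ih =>
      rw [Function.iterate_succ_apply]
      have hvw : S7D (v + w) f = fun y => S7D v f y + S7D w f y := by
        funext y; exact S7D_add_v v w
      rw [hvw]
      have hsum : ContDiffOn ℝ (⊤:ℕ∞) (fun y => S7D v f y + S7D w f y) s :=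
        (S7D_contDiffOn hs hf v).add (S7D_contDiffOn hs hf w)
      rw [ih hsum hx]
      have hterm : ∀ k ∈ Finset.range (n+1),
          (n.choose k : ℝ) * ((S7D v)^[k] ((S7D w)^[n-k] (fun y => S7D v f y + S7D w f y))) x
          = (n.choose k : ℝ) * (((S7D v)^[k+1] ((S7D w)^[n-k] f)) x
              + ((S7D v)^[k] ((S7D w)^[n-k+1] f)) x) := by
        intro k hk
        congr 1
        have e1 : EqOn ((S7D w)^[n-k] (fun y => S7D v f y + S7D w f y))
            (fun y => (S7D w)^[n-k] (S7D v f) y + (S7D w)^[n-k] (S7D w f) y) s :=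
          fun y hy => S7D_iter_add hs (S7D_contDiffOn hs hf v) (S7D_contDiffOn hs hf w) hy w (n-k)
        rw [S7D_iter_congr hs e1 v k hx]
        rw [S7D_iter_add hs (S7D_iter_contDiffOn hs (S7D_contDiffOn hs hf v) w (n-k))
          (S7D_iter_contDiffOn hs (S7D_contDiffOn hs hf w) w (n-k)) hx v k]
        congr 1
        · have e2 : EqOn ((S7D w)^[n-k] (S7D v f)) (S7D v ((S7D w)^[n-k] f)) s :=
            fun y hy => (S7D_comm_iter hs hf hy w v (n-k)).symm
          rw [S7D_iter_congr hs e2 v k hx, Function.iterate_succ_apply]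
      rw [Finset.sum_congr rfl hterm]
      exact S7_pascal n (fun i j => ((S7D v)^[i] ((S7D w)^[j] f)) x)

noncomputable def S7Phi : (ℝ × ℝ) →L[ℝ] (ℝ × ℝ) :=
  (ContinuousLinearMap.fst ℝ ℝ ℝ + ContinuousLinearMap.snd ℝ ℝ ℝ).prod
    (ContinuousLinearMap.snd ℝ ℝ ℝ)

lemma S7Phi_apply (y : ℝ × ℝ) : S7Phi y = (y.1 + y.2, y.2) := rfl

lemma S7D_comp_phi (hs : IsOpen s) (hf : ContDiffOn ℝ (⊤:ℕ∞) f s)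
    (hx : S7Phi x ∈ s) (v : ℝ × ℝ) :
    S7D v (f ∘ S7Phi) x = S7D (S7Phi v) f (S7Phi x) := by
  show fderiv ℝ (f ∘ S7Phi) x v = _
  rw [fderiv_comp x (S7diffAt hs hf hx) S7Phi.differentiableAt,
    ContinuousLinearMap.fderiv]
  rfl

lemma S7D_iter_comp_phi (hs : IsOpen s) (v : ℝ × ℝ) (k : ℕ) :
    ∀ (f : ℝ × ℝ → ℝ), ContDiffOn ℝ (⊤:ℕ∞) f s → ∀ x : ℝ × ℝ, S7Phi x ∈ s →
    (S7D v)^[k] (f ∘ S7Phi) x = ((S7D (S7Phi v))^[k] f) (S7Phi x) := by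
  induction k with
  | zero => intro f hf x hx; rfl
  | succ k ih =>
      intro f hf x hx
      rw [Function.iterate_succ_apply]
      have hpre : IsOpen (S7Phi ⁻¹' s) := hs.preimage S7Phi.continuous
      have h1 : EqOn (S7D v (f ∘ S7Phi)) ((S7D (S7Phi v) f) ∘ S7Phi) (S7Phi ⁻¹' s) :=
        fun y hy => S7D_comp_phi hs hf hy v
      rw [S7D_iter_congr hpre h1 v k hx]
      rw [ih (S7D (S7Phi v) f) (S7D_contDiffOn hs hf _) x hx]
      rw [← Function.iterate_succ_apply]

lemma S7_limit {U' O : Set (ℝ × ℝ)} {f₁ f₂ : ℝ × ℝ → ℝ}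
    (h1 : ContinuousOn f₁ U') (h2 : ContinuousOn f₂ U') (hO : O ⊆ U')
    (heq : EqOn f₁ f₂ O) (hx : x ∈ U') (hcl : x ∈ closure O) : f₁ x = f₂ x := by
  haveI : (nhdsWithin x O).NeBot := mem_closure_iff_nhdsWithin_neBot.1 hcl
  have t1 : Filter.Tendsto f₁ (nhdsWithin x O) (nhds (f₁ x)) := (h1 x hx).mono hO
  have t2 : Filter.Tendsto f₂ (nhdsWithin x O) (nhds (f₂ x)) := (h2 x hx).mono hO
  have hev : f₁ =ᶠ[nhdsWithin x O] f₂ := Filter.eventuallyEq_of_mem self_mem_nhdsWithin heq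
  exact tendsto_nhds_unique (t1.congr' hev) t2

lemma S7_peel (hs : IsOpen s) {k : ℕ} (hf : ContDiffOn ℝ (⊤:ℕ∞) f s) (hx : x ∈ s)
    (v : Fin (k+1) → ℝ × ℝ) :
    iteratedFDeriv ℝ (k+1) f x v
      = iteratedFDeriv ℝ k (S7D (v (Fin.last k)) f) x (Fin.init v) := by
  have e0 : iteratedFDeriv ℝ (k+1) f x v = iteratedFDerivWithin ℝ (k+1) f s x v := by
    rw [iteratedFDerivWithin_of_isOpen (k+1) hs hx]
  rw [e0, iteratedFDerivWithin_succ_apply_right hs.uniqueDiffOn hx]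
  have hf' : ContDiffOn ℝ (⊤:ℕ∞) (fderivWithin ℝ f s) s :=
    hf.fderivWithin hs.uniqueDiffOn (by simp)
  have hcl := (ContinuousLinearMap.apply ℝ ℝ (v (Fin.last k))).iteratedFDerivWithin_comp_left
    (f := fderivWithin ℝ f s) (hf' x hx) hs.uniqueDiffOn hx (i := k) (by exact_mod_cast le_top)
  have e1 : iteratedFDerivWithin ℝ k (fderivWithin ℝ f s) s x (Fin.init v) (v (Fin.last k))
      = iteratedFDerivWithin ℝ k
          ((ContinuousLinearMap.apply ℝ ℝ (v (Fin.last k))) ∘ (fderivWithin ℝ f s)) s x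
          (Fin.init v) := by
    rw [hcl]; rfl
  rw [e1]
  have e2 : EqOn ((ContinuousLinearMap.apply ℝ ℝ (v (Fin.last k))) ∘ (fderivWithin ℝ f s))
      (S7D (v (Fin.last k)) f) s := by
    intro y hy
    simp [S7D, Function.comp, fderivWithin_of_isOpen hs hy]
  rw [iteratedFDerivWithin_congr e2 hx]
  rw [iteratedFDerivWithin_of_isOpen k hs hx]

lemma S7_iterated (hs : IsOpen s) :
    ∀ (n m : ℕ) (f : ℝ × ℝ → ℝ), ContDiffOn ℝ (⊤:ℕ∞) f s → ∀ x ∈ s,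
    iteratedFDeriv ℝ (m + n) f x
      (fun i : Fin (m + n) => if (i : ℕ) < m then ((1:ℝ), (0:ℝ)) else ((0:ℝ), (1:ℝ)))
      = (S7D (1,0))^[m] ((S7D (0,1))^[n] f) x := by
  intro n
  induction n with
  | zero =>
      intro m
      induction m with
      | zero => intro f hf x hx; simp [iteratedFDeriv_zero_apply]
      | succ m ihm =>
          intro f hf x hx
          have h := S7_peel hs (k := m) hf hx
            (fun i : Fin (m+1) => if (i : ℕ) < m+1 then ((1:ℝ), (0:ℝ)) else ((0:ℝ), (1:ℝ)))
          have hlast : (if ((Fin.last m : Fin (m+1)) : ℕ) < m+1 then ((1:ℝ), (0:ℝ))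
              else ((0:ℝ), (1:ℝ))) = ((1:ℝ), (0:ℝ)) := by
            simp [Fin.last]
          have hinit : (Fin.init (fun i : Fin (m+1) =>
              if (i : ℕ) < m+1 then ((1:ℝ), (0:ℝ)) else ((0:ℝ), (1:ℝ))))
              = fun i : Fin m => if (i : ℕ) < m then ((1:ℝ), (0:ℝ)) else ((0:ℝ), (1:ℝ)) := by
            funext i
            simp only [Fin.init, Fin.coe_castSucc]
            have : (i : ℕ) < m + 1 := Nat.lt_succ_of_lt i.isLt
            rw [if_pos this, if_pos i.isLt]
          rw [hlast, hinit] at h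
          have h2 := ihm (S7D (1,0) f) (S7D_contDiffOn hs hf _) x hx
          rw [h]; exact h2
  | succ n ihn =>
      intro m f hf x hx
      have h := S7_peel hs (k := m + n) hf hx
        (fun i : Fin (m+n+1) => if (i : ℕ) < m then ((1:ℝ), (0:ℝ)) else ((0:ℝ), (1:ℝ)))
      have hlast : (if ((Fin.last (m+n) : Fin (m+n+1)) : ℕ) < m then ((1:ℝ), (0:ℝ))
          else ((0:ℝ), (1:ℝ))) = ((0:ℝ), (1:ℝ)) := by
        simp [Fin.last]
      have hinit : (Fin.init (fun i : Fin (m+n+1) =>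
          if (i : ℕ) < m then ((1:ℝ), (0:ℝ)) else ((0:ℝ), (1:ℝ))))
          = fun i : Fin (m+n) => if (i : ℕ) < m then ((1:ℝ), (0:ℝ)) else ((0:ℝ), (1:ℝ)) := by
        funext i
        simp only [Fin.init, Fin.coe_castSucc]
      rw [hlast, hinit] at h
      show (iteratedFDeriv ℝ (m+n+1) f x)
          (fun i : Fin (m+n+1) => if (i : ℕ) < m then ((1:ℝ), (0:ℝ)) else ((0:ℝ), (1:ℝ)))
          = (S7D (1,0))^[m] ((S7D (0,1))^[n+1] f) x
      rw [h]; exact ihn m (S7D (0,1) f) (S7D_contDiffOn hs hf _) x hx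

/-- Let `G` be `C^∞` on `(a,b) × (−δ,δ)` and invariant under
`F̂(τ,φ) = (τ + φ, φ)`: `G(τ + φ, φ) = G(τ,φ)` whenever `τ, τ + φ ∈ (a,b)` and
`φ ∈ [0,δ)`. Then every mixed partial derivative of `G` involving at least one
`τ`-differentiation vanishes on the boundary interval `(a,b) × {0}`:
`∂^{m+n}G/∂τ^m ∂φ^n (τ₀,0) = 0` for all `τ₀ ∈ (a,b)`, `m ≥ 1`, `n ≥ 0`;
i.e. the Taylor series of `G` at each `(τ₀,0)` contains only powers of `φ`. -/
theorem statement7 (a b δ : ℝ) (hab : a < b) (hδ : 0 < δ)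
    (G : ℝ × ℝ → ℝ)
    (hG : ContDiffOn ℝ (⊤ : ℕ∞) G (Set.Ioo a b ×ˢ Set.Ioo (-δ) δ))
    (hinv : ∀ τ ∈ Set.Ioo a b, ∀ φ ∈ Set.Ico (0:ℝ) δ,
      τ + φ ∈ Set.Ioo a b → G (τ + φ, φ) = G (τ, φ)) :
    ∀ τ₀ ∈ Set.Ioo a b, ∀ m n : ℕ, 1 ≤ m →
      iteratedFDeriv ℝ (m + n) G (τ₀, 0)
        (fun i : Fin (m + n) =>
          if (i : ℕ) < m then ((1:ℝ), (0:ℝ)) else ((0:ℝ), (1:ℝ))) = 0 := by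
  intro τ₀ hτ₀ m n hm
  obtain ⟨ha, hb⟩ := hτ₀
  set U : Set (ℝ × ℝ) := Set.Ioo a b ×ˢ Set.Ioo (-δ) δ with hUdef
  have hU : IsOpen U := isOpen_Ioo.prod isOpen_Ioo
  have hG' : ContDiffOn ℝ (⊤:ℕ∞) G U := hG.of_le (by simp)
  have hx₀ : ((τ₀, (0:ℝ)) : ℝ × ℝ) ∈ U := by
    simp only [hUdef, Set.mem_prod, Set.mem_Ioo]
    refine ⟨⟨ha, hb⟩, ?_, hδ⟩
    linarith
  rw [S7_iterated hU n m G hG' _ hx₀]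
  -- setup
  have hpre : IsOpen (S7Phi ⁻¹' U) := hU.preimage S7Phi.continuous
  have hPhix₀ : S7Phi (τ₀, (0:ℝ)) = (τ₀, (0:ℝ)) := by
    rw [S7Phi_apply]; norm_num
  have hGΦ : ContDiffOn ℝ (⊤:ℕ∞) (G ∘ S7Phi) (S7Phi ⁻¹' U) :=
    hG'.comp S7Phi.contDiff.contDiffOn (fun y hy => hy)
  set ε : ℝ := min δ (min ((τ₀ - a)/2) ((b - τ₀)/2)) with hεdef
  have hε : 0 < ε := by
    apply lt_min hδ; apply lt_min <;> linarith
  have hεδ : ε ≤ δ := min_le_left _ _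
  have hεa : ε ≤ (τ₀ - a)/2 := le_trans (min_le_right _ _) (min_le_left _ _)
  have hεb : ε ≤ (b - τ₀)/2 := le_trans (min_le_right _ _) (min_le_right _ _)
  set O : Set (ℝ × ℝ) := Set.Ioo (τ₀ - ε) (τ₀ + ε) ×ˢ Set.Ioo (0:ℝ) ε with hOdef
  have hOopen : IsOpen O := isOpen_Ioo.prod isOpen_Ioo
  have hOU : O ⊆ U := by
    intro y hy
    obtain ⟨⟨h1, h2⟩, h3, h4⟩ := hy
    simp only [hUdef, Set.mem_prod, Set.mem_Ioo]
    refine ⟨⟨by linarith, by linarith⟩, by linarith, by linarith⟩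
  have hOPhi : ∀ y ∈ O, S7Phi y ∈ U := by
    intro y hy
    obtain ⟨⟨h1, h2⟩, h3, h4⟩ := hy
    rw [S7Phi_apply]
    simp only [hUdef, Set.mem_prod, Set.mem_Ioo]
    refine ⟨⟨by linarith, by linarith⟩, by linarith, by linarith⟩
  set U' : Set (ℝ × ℝ) := U ∩ (S7Phi ⁻¹' U) with hU'def
  have hOU' : O ⊆ U' := fun y hy => ⟨hOU hy, hOPhi y hy⟩
  have hx₀' : ((τ₀, (0:ℝ)) : ℝ × ℝ) ∈ U' := ⟨hx₀, by simp only [Set.mem_preimage, hPhix₀]; exact hx₀⟩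
  have heqO : EqOn (G ∘ S7Phi) G O := by
    intro y hy
    obtain ⟨⟨h1, h2⟩, h3, h4⟩ := hy
    show G (S7Phi y) = G y
    rw [S7Phi_apply]
    exact hinv y.1 ⟨by linarith, by linarith⟩ y.2 ⟨le_of_lt h3, by linarith⟩
      ⟨by linarith, by linarith⟩
  have hx₀cl : ((τ₀, (0:ℝ)) : ℝ × ℝ) ∈ closure O := by
    rw [hOdef, closure_prod_eq, closure_Ioo (by linarith : τ₀ - ε ≠ τ₀ + ε),
      closure_Ioo (ne_of_lt hε)]
    exact ⟨⟨by linarith, by linarith⟩, ⟨le_refl 0, le_of_lt hε⟩⟩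
  have h11 : ((1:ℝ),(0:ℝ)) + ((0:ℝ),(1:ℝ)) = ((1:ℝ),(1:ℝ)) := by norm_num [Prod.ext_iff]
  have hPhi01 : S7Phi ((0:ℝ),(1:ℝ)) = ((1:ℝ),(1:ℝ)) := by rw [S7Phi_apply]; norm_num
  have hPhi10 : S7Phi ((1:ℝ),(0:ℝ)) = ((1:ℝ),(0:ℝ)) := by rw [S7Phi_apply]; norm_num
  -- the key relation
  have hrel : ∀ p q : ℕ,
      ∑ k ∈ Finset.range (q+1), (q.choose k : ℝ)
        * ((S7D (1,0))^[p+k] ((S7D (0,1))^[q-k] G) (τ₀, 0))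
      = (S7D (1,0))^[p] ((S7D (0,1))^[q] G) (τ₀, 0) := by
    intro p q
    have hCsmooth : ContDiffOn ℝ (⊤:ℕ∞) ((S7D (1,1))^[q] G) U :=
      S7D_iter_contDiffOn hU hG' _ q
    have hFsmooth : ∀ k : ℕ, ContDiffOn ℝ (⊤:ℕ∞) ((S7D (1,0))^[k] ((S7D (0,1))^[q-k] G)) U :=
      fun k => S7D_iter_contDiffOn hU (S7D_iter_contDiffOn hU hG' _ _) _ _
    -- step 1 : A^[p] C^[q] G x₀ = LHS sum
    have hbin : EqOn ((S7D (1,1))^[q] G)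
        (fun y => ∑ k ∈ Finset.range (q+1), (q.choose k : ℝ)
          * ((S7D (1,0))^[k] ((S7D (0,1))^[q-k] G)) y) U := by
      intro y hy
      have hb := S7_binom hU ((1:ℝ),(0:ℝ)) ((0:ℝ),(1:ℝ)) q hG' hy
      rw [h11] at hb
      exact hb
    have step1 : (S7D (1,0))^[p] ((S7D (1,1))^[q] G) (τ₀, 0)
        = ∑ k ∈ Finset.range (q+1), (q.choose k : ℝ)
          * ((S7D (1,0))^[p+k] ((S7D (0,1))^[q-k] G) (τ₀, 0)) := by
      rw [S7D_iter_congr hU hbin (1,0) p hx₀]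
      rw [S7D_iter_sum hU hFsmooth hx₀ (1,0) p]
      exact Finset.sum_congr rfl fun k _ => by
        rw [Function.iterate_add_apply]
    -- step 2 : A^[p] C^[q] G x₀ = A^[p] B^[q] G x₀
    have hQ1 : ∀ y ∈ S7Phi ⁻¹' U,
        (S7D (1,0))^[p] ((S7D (0,1))^[q] (G ∘ S7Phi)) y
          = ((S7D (1,0))^[p] ((S7D (1,1))^[q] G)) (S7Phi y) := by
      intro y hy
      have e1 : EqOn ((S7D (0,1))^[q] (G ∘ S7Phi))
          (((S7D (1,1))^[q] G) ∘ S7Phi) (S7Phi ⁻¹' U) := by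
        intro z hz
        have h := S7D_iter_comp_phi hU (0,1) q G hG' z hz
        rw [hPhi01] at h
        exact h
      rw [S7D_iter_congr hpre e1 (1,0) p hy]
      have h := S7D_iter_comp_phi hU (1,0) p ((S7D (1,1))^[q] G) hCsmooth y hy
      rw [hPhi10] at h
      exact h
    have hc1 : ContinuousOn ((S7D (1,0))^[p] ((S7D (0,1))^[q] (G ∘ S7Phi))) U' :=
      ((S7D_iter_contDiffOn hpre (S7D_iter_contDiffOn hpre hGΦ _ q) _ p).continuousOn).mono
        Set.inter_subset_right
    have hc2 : ContinuousOn ((S7D (1,0))^[p] ((S7D (0,1))^[q] G)) U' :=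
      ((S7D_iter_contDiffOn hU (S7D_iter_contDiffOn hU hG' _ q) _ p).continuousOn).mono
        Set.inter_subset_left
    have heqQ : EqOn ((S7D (1,0))^[p] ((S7D (0,1))^[q] (G ∘ S7Phi)))
        ((S7D (1,0))^[p] ((S7D (0,1))^[q] G)) O :=
      S7D_iter_congr hOopen (S7D_iter_congr hOopen heqO (0,1) q) (1,0) p
    have hQ12 := S7_limit hc1 hc2 hOU' heqQ hx₀' hx₀cl
    have step2 : (S7D (1,0))^[p] ((S7D (1,1))^[q] G) (τ₀, 0)
        = (S7D (1,0))^[p] ((S7D (0,1))^[q] G) (τ₀, 0) := by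
      rw [← hQ12, hQ1 (τ₀, 0) (by simp only [Set.mem_preimage, hPhix₀]; exact hx₀), hPhix₀]
    rw [← step1, step2]
  -- final strong induction
  have main : ∀ q p : ℕ, 1 ≤ p → (S7D (1,0))^[p] ((S7D (0,1))^[q] G) (τ₀, 0) = 0 := by
    intro q
    induction q using Nat.strong_induction_on with
    | _ q IH =>
      intro p hp
      have h := hrel (p-1) (q+1)
      rw [Finset.sum_range_succ'] at h
      have h0 : ((q+1).choose 0 : ℝ)
          * ((S7D (1,0))^[p-1+0] ((S7D (0,1))^[q+1-0] G) (τ₀, 0))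
          = (S7D (1,0))^[p-1] ((S7D (0,1))^[q+1] G) (τ₀, 0) := by
        norm_num
      rw [h0] at h
      have hS : ∑ k ∈ Finset.range (q+1), ((q+1).choose (k+1) : ℝ)
          * ((S7D (1,0))^[p-1+(k+1)] ((S7D (0,1))^[q+1-(k+1)] G) (τ₀, 0)) = 0 := by
        linarith [h]
      have hg : ∀ k ∈ Finset.range (q+1), ((q+1).choose (k+1) : ℝ)
          * ((S7D (1,0))^[p-1+(k+1)] ((S7D (0,1))^[q+1-(k+1)] G) (τ₀, 0))
          = if k = 0 then ((q:ℝ)+1) * ((S7D (1,0))^[p] ((S7D (0,1))^[q] G) (τ₀, 0)) else 0 := by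
        intro k hk
        by_cases hk0 : k = 0
        · subst hk0
          have e1 : p - 1 + (0+1) = p := by omega
          have e2 : q + 1 - (0+1) = q := by omega
          rw [e1, e2, if_pos rfl]
          norm_num
        · rw [if_neg hk0]
          have hk' : k < q + 1 := Finset.mem_range.1 hk
          have e3 : (S7D (1,0))^[p-1+(k+1)] ((S7D (0,1))^[q+1-(k+1)] G) (τ₀, 0) = 0 :=
            IH (q+1-(k+1)) (by omega) (p-1+(k+1)) (by omega)
          rw [e3, mul_zero]
      rw [Finset.sum_congr rfl hg, Finset.sum_ite_eq' (Finset.range (q+1)) 0] at hS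
      simp only [Finset.mem_range, Nat.succ_pos, if_pos] at hS
      have hq1 : ((q:ℝ)+1) ≠ 0 := by positivity
      rcases mul_eq_zero.1 hS with h' | h'
      · exact absurd h' hq1
      · exact h'
  exact main n m hm
end

section
/- Let (φ_k)_{k∈ℕ} be a sequence of positive reals with φ_k → 0, and let (N_k)_{k∈ℕ} be natural numbers with N_k φ_k bounded. For each k, let M_{1,k}, …, M_{N_k,k} be invertible real 2×2 matrices such that for every m ∈ ℕ one has sup_{1 ≤ j ≤ N_k} ‖M_{j,k} − A‖ = o(φ_k^m) as k → ∞, where A is the unipotent Jordan cell A = [[1,1],[0,1]] and ‖·‖ is the operator norm. Then the ordered products satisfy, for every m ∈ ℕ: ‖M_{N_k,k} ⋯ M_{2,k} M_{1,k} − A^{N_k}‖ = o(φ_k^m) as k → ∞, where A^{N} = [[1,N],[0,1]]. -/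
/-!
Write `P n = M n ⋯ M 1`. Telescoping gives
`P n - A ^ n = ∑ j < n, A ^ (n - 1 - j) * (M (j + 1) - A) * P j`, so as long as the powers of `A`
up to `n` have norm at most `a`, a discrete Grönwall argument bounds the error by
`a * ((1 + a u) ^ n - 1) ≤ a * (exp (n a u) - 1)`, where `u` bounds `‖M j - A‖`. The Jordan cell
is `1 + E` with `E * E = 0`, so `‖A ^ i‖` grows only linearly, and with `n = N k = O(φ k⁻¹)` the
exponent `n a u` tends to zero and the error is `O(n ^ 3 u)`, which is `o(φ k ^ m)` because `u`
is `o(φ k ^ (m + 3))`.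
-/

open Asymptotics Filter Topology
open scoped Matrix.Norms.L2Operator

section OrderedProd

variable {R : Type*}

/-- `orderedProd f n = f (n - 1) * ⋯ * f 1 * f 0`. -/
def orderedProd [Monoid R] (f : ℕ → R) (n : ℕ) : R :=
  ((List.range n).reverse.map f).prod

@[simp]
theorem orderedProd_zero [Monoid R] (f : ℕ → R) : orderedProd f 0 = 1 := rfl

theorem orderedProd_succ [Monoid R] (f : ℕ → R) (n : ℕ) :
    orderedProd f (n + 1) = f n * orderedProd f n := by
  simp [orderedProd, List.range_succ]

theorem orderedProd_sub_pow [Ring R] (f : ℕ → R) (A : R) (n : ℕ) :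
    orderedProd f n - A ^ n =
      ∑ j ∈ Finset.range n, A ^ (n - 1 - j) * (f j - A) * orderedProd f j := by
  have key := Finset.sum_range_sub (fun i => A ^ (n - i) * orderedProd f i) n
  simp only [Nat.sub_self, pow_zero, one_mul, Nat.sub_zero, orderedProd_zero, mul_one] at key
  rw [← key]
  refine Finset.sum_congr rfl fun j hj => ?_
  have hn : n - j = n - 1 - j + 1 := by have := Finset.mem_range.mp hj; omega
  rw [hn, Nat.sub_sub, add_comm 1 j, orderedProd_succ, pow_succ]
  noncomm_ring

theorem norm_orderedProd_sub_pow_le [NormedRing R] {f : ℕ → R} {A : R} {a u : ℝ} {n : ℕ}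
    (hA : ∀ i ≤ n, ‖A ^ i‖ ≤ a) (hu : 0 ≤ u) (hf : ∀ j < n, ‖f j - A‖ ≤ u) :
    ‖orderedProd f n - A ^ n‖ ≤ a * ((1 + a * u) ^ n - 1) := by
  induction n using Nat.strong_induction_on with
  | _ n ih =>
  have ha : 0 ≤ a := (norm_nonneg _).trans (hA 0 n.zero_le)
  have hprod : ∀ j < n, ‖orderedProd f j‖ ≤ a * (1 + a * u) ^ j := fun j hj =>
    calc ‖orderedProd f j‖ ≤ ‖A ^ j‖ + ‖orderedProd f j - A ^ j‖ := norm_le_insert' _ _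
      _ ≤ a + a * ((1 + a * u) ^ j - 1) :=
          add_le_add (hA j hj.le)
            (ih j hj (fun i hi => hA i (by omega)) (fun i hi => hf i (by omega)))
      _ = a * (1 + a * u) ^ j := by ring
  calc ‖orderedProd f n - A ^ n‖
      ≤ ∑ j ∈ Finset.range n, ‖A ^ (n - 1 - j)‖ * ‖f j - A‖ * ‖orderedProd f j‖ := by
        rw [orderedProd_sub_pow]
        exact norm_sum_le_of_le _ fun j _ => norm_mul₃_le
    _ ≤ ∑ j ∈ Finset.range n, a * u * (a * (1 + a * u) ^ j) := by
        refine Finset.sum_le_sum fun j hj => ?_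
        have hj := Finset.mem_range.mp hj
        gcongr
        exacts [hA _ (by omega), hf j hj, hprod j hj]
    _ = a * ((1 + a * u) ^ n - 1) := by
        rw [← geom_sum_mul, add_sub_cancel_left, Finset.sum_mul, Finset.mul_sum]
        exact Finset.sum_congr rfl fun j _ => by ring

theorem norm_orderedProd_sub_pow_le_of_norm_pow_le [NormedRing R] {f : ℕ → R} {A : R}
    {c u : ℝ} {d n : ℕ} (hA : ∀ i : ℕ, ‖A ^ i‖ ≤ c * ((i : ℝ) + 1) ^ d) (hu : 0 ≤ u)
    (hf : ∀ j < n, ‖f j - A‖ ≤ u) (hsmall : c * (((n : ℝ) + 1) ^ (2 * d + 1) * u) ≤ 1) :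
    ‖orderedProd f n - A ^ n‖ ≤ 2 * c ^ 2 * (((n : ℝ) + 1) ^ (2 * d + 1) * u) := by
  have hc : 0 ≤ c := by simpa using (norm_nonneg _).trans (hA 0)
  set a := c * ((n : ℝ) + 1) ^ d with ha
  have ha0 : 0 ≤ a := by positivity
  have hAn : ∀ i ≤ n, ‖A ^ i‖ ≤ a := fun i hi => (hA i).trans (by rw [ha]; gcongr)
  have hn : (n : ℝ) ≤ n + 1 := by linarith
  have hy : n * (a * u) ≤ c * (((n : ℝ) + 1) ^ (2 * d + 1) * u) :=
    calc n * (a * u) = c * (((n : ℝ) + 1) ^ d * n * u) := by rw [ha]; ring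
      _ ≤ c * (((n : ℝ) + 1) ^ d * (n + 1) * u) := by gcongr
      _ = c * (((n : ℝ) + 1) ^ (d + 1) * u) := by ring
      _ ≤ c * (((n : ℝ) + 1) ^ (2 * d + 1) * u) := by
          gcongr
          · linarith
          · omega
  have hexp : (1 + a * u) ^ n - 1 ≤ 2 * (n * (a * u)) := by
    have h1 : (1 + a * u) ^ n ≤ Real.exp (n * (a * u)) := by
      rw [Real.exp_nat_mul]
      gcongr ?_ ^ n
      linarith [Real.add_one_le_exp (a * u)]
    have hy0 : |(n : ℝ) * (a * u)| = n * (a * u) := abs_of_nonneg (by positivity)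
    have h2 := (le_abs_self _).trans (Real.abs_exp_sub_one_le (hy0.trans_le (hy.trans hsmall)))
    rw [hy0] at h2
    linarith
  calc ‖orderedProd f n - A ^ n‖ ≤ a * ((1 + a * u) ^ n - 1) :=
        norm_orderedProd_sub_pow_le hAn hu hf
    _ ≤ a * (2 * (n * (a * u))) := by gcongr
    _ = 2 * c ^ 2 * (((n : ℝ) + 1) ^ (2 * d) * n * u) := by rw [ha]; ring
    _ ≤ 2 * c ^ 2 * (((n : ℝ) + 1) ^ (2 * d) * (n + 1) * u) := by gcongr
    _ = 2 * c ^ 2 * (((n : ℝ) + 1) ^ (2 * d + 1) * u) := by ring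

theorem one_add_pow_of_mul_self_eq_zero [Ring R] {E : R} (hE : E * E = 0) (n : ℕ) :
    (1 + E) ^ n = 1 + n • E := by
  induction n with
  | zero => simp
  | succ n ih =>
    rw [pow_succ, ih]
    simp only [add_mul, mul_add, one_mul, mul_one, smul_mul_assoc, hE, smul_zero, add_zero,
      succ_nsmul]
    abel

theorem norm_one_add_pow_le [NormedRing R] {E : R} (hE : E * E = 0) (n : ℕ) :
    ‖(1 + E) ^ n‖ ≤ (‖(1 : R)‖ + ‖E‖) * ((n : ℝ) + 1) := by
  rw [one_add_pow_of_mul_self_eq_zero hE]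
  calc ‖1 + n • E‖ ≤ ‖(1 : R)‖ + n * ‖E‖ := (norm_add_le _ _).trans (by gcongr; exact norm_nsmul_le)
    _ ≤ (‖(1 : R)‖ + ‖E‖) * ((n : ℝ) + 1) := by nlinarith [norm_nonneg (1 : R), norm_nonneg E]

end OrderedProd

theorem isLittleO_pow_mul_of_isBigO_mul {α : Type*} {l : Filter α} {x φ u : α → ℝ} {m p : ℕ}
    (hx : (fun k => x k * φ k) =O[l] fun _ => (1 : ℝ)) (hu : u =o[l] fun k => φ k ^ (m + p)) :
    (fun k => x k ^ p * u k) =o[l] fun k => φ k ^ m := by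
  refine ((isBigO_refl (fun k => x k ^ p) l).mul_isLittleO hu).trans_isBigO ?_
  exact ((hx.pow p).mul (isBigO_refl (fun k => φ k ^ m) l)).congr (fun k => by ring)
    (fun k => by ring)

theorem isLittleO_norm_orderedProd_sub_pow {α R : Type*} [NormedRing R] {l : Filter α} {A : R}
    {c : ℝ} {d m : ℕ} (hA : ∀ i : ℕ, ‖A ^ i‖ ≤ c * ((i : ℝ) + 1) ^ d) {φ u : α → ℝ}
    {N : α → ℕ} {M : α → ℕ → R} (hφ : Tendsto φ l (𝓝 0))
    (hN : (fun k => ((N k : ℝ) + 1) * φ k) =O[l] fun _ => (1 : ℝ))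
    (hM : ∀ k, ∀ j < N k, ‖M k j - A‖ ≤ u k) (hu : u =o[l] fun k => φ k ^ (m + (2 * d + 1))) :
    (fun k => ‖orderedProd (M k) (N k) - A ^ N k‖) =o[l] fun k => φ k ^ m := by
  set w := fun k => ((N k : ℝ) + 1) ^ (2 * d + 1) * |u k|
  have hw : w =o[l] fun k => φ k ^ m := isLittleO_pow_mul_of_isBigO_mul hN hu.abs_left
  have hw0 : Tendsto w l (𝓝 0) :=
    (isLittleO_one_iff ℝ).mp (hw.trans_isBigO ((hφ.pow m).isBigO_one ℝ))
  have hsmall : ∀ᶠ k in l, c * w k ≤ 1 :=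
    (hw0.const_mul c).eventually (ge_mem_nhds (by simp))
  refine IsBigO.trans_isLittleO (IsBigO.of_bound (2 * c ^ 2) ?_) hw
  filter_upwards [hsmall] with k hk
  rw [norm_norm, Real.norm_of_nonneg (by positivity)]
  exact norm_orderedProd_sub_pow_le_of_norm_pow_le hA (abs_nonneg _)
    (fun j hj => (hM k j hj).trans (le_abs_self _)) hk

theorem statement10_general (φ : ℕ → ℝ) (hφpos : ∀ k, 0 < φ k)
    (hφ0 : Tendsto φ atTop (nhds 0))
    (N : ℕ → ℕ) (hNbdd : ∃ C : ℝ, ∀ k, (N k : ℝ) * φ k ≤ C)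
    (M : ℕ → ℕ → Matrix (Fin 2) (Fin 2) ℝ)
    (A : Matrix (Fin 2) (Fin 2) ℝ) (hA : A = !![1, 1; 0, 1])
    (hclose : ∀ m : ℕ, ∃ u : ℕ → ℝ,
      (∀ k, ∀ j, 1 ≤ j → j ≤ N k → ‖M k j - A‖ ≤ u k) ∧
      u =o[atTop] fun k => φ k ^ m) :
    ∀ m : ℕ,
      (fun k => ‖((List.range (N k)).reverse.map (fun j => M k (j + 1))).prod - A ^ N k‖)
        =o[atTop] fun k => φ k ^ m := by
  intro m
  obtain ⟨C, hC⟩ := hNbdd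
  have hN : (fun k => ((N k : ℝ) + 1) * φ k) =O[atTop] fun _ => (1 : ℝ) := by
    have hNφ : (fun k => (N k : ℝ) * φ k) =O[atTop] fun _ => (1 : ℝ) :=
      IsBigO.of_bound C (.of_forall fun k => by
        rw [Real.norm_of_nonneg (mul_nonneg (N k).cast_nonneg (hφpos k).le), norm_one, mul_one]
        exact hC k)
    exact (hNφ.add (hφ0.isBigO_one ℝ)).congr_left fun k => by ring
  have hE : (!![0, 1; 0, 0] : Matrix (Fin 2) (Fin 2) ℝ) * !![0, 1; 0, 0] = 0 := by
    ext i j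
    fin_cases i <;> fin_cases j <;> simp
  have hA1 : A = 1 + !![0, 1; 0, 0] := by
    rw [hA, Matrix.one_fin_two]; simp
  obtain ⟨u, hMu, hu⟩ := hclose (m + (2 * 1 + 1))
  exact isLittleO_norm_orderedProd_sub_pow (d := 1)
    (fun i => by simpa [hA1] using norm_one_add_pow_le hE i) hφ0 hN
    (fun k j hj => hMu k (j + 1) (by omega) (by omega)) hu

/-- Let `φ_k > 0`, `φ_k → 0`, and `N_k ∈ ℕ` with `N_k φ_k` bounded.
Let `M_{1,k}, …, M_{N_k,k}` be invertible `2×2` real matrices with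
`sup_{1 ≤ j ≤ N_k} ‖M_{j,k} − A‖ = o(φ_k^m)` (as `k → ∞`) for every `m`, where
`A = [[1,1],[0,1]]` and `‖·‖` is the operator norm. Then for every `m` the ordered
products satisfy `‖M_{N_k,k} ⋯ M_{1,k} − A^{N_k}‖ = o(φ_k^m)` as `k → ∞`. -/
theorem statement10 (φ : ℕ → ℝ) (hφpos : ∀ k, 0 < φ k)
    (hφ0 : Tendsto φ atTop (nhds 0))
    (N : ℕ → ℕ) (hNbdd : ∃ C : ℝ, ∀ k, (N k : ℝ) * φ k ≤ C)
    (M : ℕ → ℕ → Matrix (Fin 2) (Fin 2) ℝ)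
    (hMinv : ∀ k, ∀ j, 1 ≤ j → j ≤ N k → IsUnit (M k j))
    (A : Matrix (Fin 2) (Fin 2) ℝ) (hA : A = !![1, 1; 0, 1])
    (hclose : ∀ m : ℕ, ∃ u : ℕ → ℝ,
      (∀ k, ∀ j, 1 ≤ j → j ≤ N k → ‖M k j - A‖ ≤ u k) ∧
      u =o[atTop] fun k => φ k ^ m) :
    ∀ m : ℕ,
      (fun k => ‖((List.range (N k)).reverse.map (fun j => M k (j + 1))).prod - A ^ N k‖)
        =o[atTop] fun k => φ k ^ m :=
  statement10_general φ hφpos hφ0 N hNbdd M A hA hclose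
end

section
/- Let V be a nonzero finite-dimensional real normed vector space and let ρ : GL₂(ℝ) → GL(V) be a continuous group homomorphism. Let (φ_k)_{k∈ℕ} be positive reals with φ_k → 0 and let (N_k)_{k∈ℕ} be natural numbers with N_k φ_k bounded. For each k, let M_{1,k}, …, M_{N_k,k} ∈ GL(V) be such that for every m ∈ ℕ one has sup_{1 ≤ j ≤ N_k} ‖M_{j,k} − ρ(A)‖ = o(φ_k^m) as k → ∞, where A = [[1,1],[0,1]]. Then for every m ∈ ℕ the ordered products satisfy ‖M_{N_k,k} ⋯ M_{1,k} − ρ(A^{N_k})‖ = o(φ_k^m) as k → ∞. -/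
/-!
Conjugation by `diag(2, 1)` sends `A` to `A²`, so `ρ(A)^(2n)` is conjugate to `ρ(A)^n` by a fixed
operator; halving `n` repeatedly gives the polynomial bound `‖ρ(A)^n‖ ≤ K (n + 1)^d`. Expanding
`M_N ⋯ M_1` around `ρ(A)^N` one factor at a time, with `W` bounding all `ρ(A)^i` (`i ≤ N`) and
`u ≥ ‖M_j - ρ(A)‖`, bounds the error by `W ((1 + W u)^N - 1) ≤ 2 N W² u` as soon as `N W u ≤ 1`.
Since `N_k = O(φ_k⁻¹)`, `W` is `O(φ_k^(-d))`, and choosing `u = o(φ_k^(m + 2d + 1))` absorbs these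
polynomial losses.
-/

open Asymptotics Filter Matrix

theorem le_mul_pow_of_le_mul_div_two {h : ℕ → ℝ} {a : ℝ} {d : ℕ} (ha : 0 ≤ a) (had : a ≤ 2 ^ d)
    (h1 : 0 ≤ h 1) (hh : ∀ n, 2 ≤ n → h n ≤ a * h (n / 2)) :
    ∀ n, 1 ≤ n → h n ≤ h 1 * n ^ d := by
  intro n
  induction n using Nat.strong_induction_on with
  | _ n ih =>
    intro hn
    obtain rfl | hn2 : n = 1 ∨ 2 ≤ n := by omega
    · simp
    have hhalf : ((2 * (n / 2) : ℕ) : ℝ) ≤ n := by exact_mod_cast Nat.mul_div_le n 2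
    calc h n ≤ a * h (n / 2) := hh n hn2
      _ ≤ a * (h 1 * ((n / 2 : ℕ) : ℝ) ^ d) :=
          mul_le_mul_of_nonneg_left (ih _ (by omega) (by omega)) ha
      _ ≤ 2 ^ d * (h 1 * ((n / 2 : ℕ) : ℝ) ^ d) := by gcongr
      _ = h 1 * ((2 * (n / 2) : ℕ) : ℝ) ^ d := by push_cast; ring
      _ ≤ h 1 * n ^ d := by gcongr

theorem isBigO_natCast_add_one_inv {ι : Type*} {l : Filter ι} {φ : ι → ℝ} {N : ι → ℕ} {C : ℝ}
    (hφpos : ∀ k, 0 < φ k) (hφ0 : Tendsto φ l (nhds 0)) (hN : ∀ k, N k * φ k ≤ C) :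
    (fun k => (N k : ℝ) + 1) =O[l] fun k => (φ k)⁻¹ := by
  refine IsBigO.of_bound (C + 1) ?_
  filter_upwards [hφ0.eventually (eventually_le_nhds one_pos)] with k hk
  rw [Real.norm_of_nonneg (by positivity), Real.norm_of_nonneg (inv_pos.2 (hφpos k)).le,
    ← div_eq_mul_inv, le_div_iff₀ (hφpos k), add_mul, one_mul]
  linarith [hN k]

section NormedRing

variable {R : Type*} [NormedRing R]

theorem exists_norm_pow_le_of_conj_eq_sq (u : Rˣ) {b : R} (hb : ↑u * b * ↑u⁻¹ = b ^ 2) :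
    ∃ K : ℝ, ∃ d : ℕ, ∀ n : ℕ, ‖b ^ n‖ ≤ K * (n + 1) ^ d := by
  set c := ‖(u : R)‖ * ‖(↑u⁻¹ : R)‖
  have heven : ∀ m, ‖b ^ (2 * m)‖ ≤ c * ‖b ^ m‖ := fun m => by
    rw [pow_mul, ← hb, Units.conj_pow]
    exact norm_mul₃_le.trans_eq (by ring)
  set a := c * max 1 ‖b‖
  have hstep : ∀ n, 2 ≤ n → ‖b ^ n‖ ≤ a * ‖b ^ (n / 2)‖ := by
    intro n _
    have hmax : ∀ k, c * ‖b ^ k‖ ≤ a * ‖b ^ k‖ := fun k =>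
      calc c * ‖b ^ k‖ ≤ c * ‖b ^ k‖ * max 1 ‖b‖ :=
            le_mul_of_one_le_right (by positivity) (le_max_left _ _)
        _ = a * ‖b ^ k‖ := by ring
    obtain ⟨m, rfl | rfl⟩ := Nat.even_or_odd' n
    · rw [Nat.mul_div_cancel_left m two_pos]
      exact (heven m).trans (hmax m)
    · rw [show (2 * m + 1) / 2 = m by omega, pow_succ]
      calc ‖b ^ (2 * m) * b‖ ≤ c * ‖b ^ m‖ * ‖b‖ :=
            (norm_mul_le _ _).trans (by gcongr; exact heven m)
        _ ≤ c * ‖b ^ m‖ * max 1 ‖b‖ := by gcongr; exact le_max_right _ _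
        _ = a * ‖b ^ m‖ := by ring
  obtain ⟨d, hd⟩ := pow_unbounded_of_one_lt a one_lt_two
  refine ⟨max ‖(1 : R)‖ ‖b‖, d, fun n => ?_⟩
  rcases n.eq_zero_or_pos with rfl | hn
  · simp
  calc ‖b ^ n‖ ≤ ‖b ^ 1‖ * n ^ d :=
        le_mul_pow_of_le_mul_div_two (h := fun k => ‖b ^ k‖) (by positivity) hd.le
          (norm_nonneg _) hstep n hn
    _ ≤ max ‖(1 : R)‖ ‖b‖ * (n + 1) ^ d := by
        rw [pow_one]; gcongr
        · exact le_max_right _ _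
        · linarith

theorem exists_norm_map_pow_le (ρ : GL (Fin 2) ℝ →* Rˣ) {A : GL (Fin 2) ℝ}
    (hA : (A : Matrix (Fin 2) (Fin 2) ℝ) = !![1, 1; 0, 1]) :
    ∃ K : ℝ, ∃ d : ℕ, ∀ n : ℕ, ‖((ρ A : Rˣ) : R) ^ n‖ ≤ K * (n + 1) ^ d := by
  set δ : GL (Fin 2) ℝ := .mkOfDetNeZero !![2, 0; 0, 1] (by simp)
  have hδ : δ * A * δ⁻¹ = A ^ 2 := by
    rw [mul_inv_eq_iff_eq_mul]
    ext i j
    fin_cases i <;> fin_cases j <;> norm_num [δ, hA, sq]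
  apply exists_norm_pow_le_of_conj_eq_sq (ρ δ)
  simp only [← Units.val_mul, ← map_inv, ← map_mul, hδ, map_pow, Units.val_pow_eq_pow_val]

theorem norm_pow_mul_list_prod_sub_pow_le {B : R} {u W : ℝ} {n : ℕ} (hu : 0 ≤ u)
    (hB : ∀ i ≤ n, ‖B ^ i‖ ≤ W) :
    ∀ L : List R, (∀ a ∈ L, ‖a - B‖ ≤ u) → ∀ i, i + L.length ≤ n →
      ‖B ^ i * (L.prod - B ^ L.length)‖ ≤ W * ((1 + W * u) ^ L.length - 1)
  | [], _, _, _ => by simp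
  | a :: L, hL, i, hi => by
    have hW : 0 ≤ W := (norm_nonneg _).trans (hB 0 (Nat.zero_le n))
    simp only [List.length_cons, List.mem_cons, forall_eq_or_imp] at hi hL ⊢
    have ih := norm_pow_mul_list_prod_sub_pow_le hu hB L hL.2
    have hprod : ‖L.prod‖ ≤ W * (1 + W * u) ^ L.length := by
      have h0 := ih 0 (by omega)
      rw [pow_zero, one_mul] at h0
      calc ‖L.prod‖ ≤ ‖B ^ L.length‖ + ‖L.prod - B ^ L.length‖ := norm_le_insert' _ _
        _ ≤ W + W * ((1 + W * u) ^ L.length - 1) := add_le_add (hB _ (by omega)) h0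
        _ = W * (1 + W * u) ^ L.length := by ring
    have hsplit : B ^ i * ((a :: L).prod - B ^ (L.length + 1)) =
        B ^ i * (a - B) * L.prod + B ^ (i + 1) * (L.prod - B ^ L.length) := by
      rw [List.prod_cons, pow_succ', pow_succ]; noncomm_ring
    rw [hsplit]
    calc _ ≤ ‖B ^ i * (a - B) * L.prod‖ + ‖B ^ (i + 1) * (L.prod - B ^ L.length)‖ :=
          norm_add_le _ _
      _ ≤ W * u * (W * (1 + W * u) ^ L.length) + W * ((1 + W * u) ^ L.length - 1) := by
          gcongr
          · exact norm_mul₃_le.trans (by gcongr; exacts [hB i (by omega), hL.1])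
          · exact ih (i + 1) (by omega)
      _ = W * ((1 + W * u) ^ (L.length + 1) - 1) := by ring

theorem one_add_pow_sub_one_le {x : ℝ} (hx : 0 ≤ x) {n : ℕ} (hnx : n * x ≤ 1) :
    (1 + x) ^ n - 1 ≤ 2 * (n * x) := by
  have hexp : (1 + x) ^ n ≤ Real.exp (n * x) := by
    rw [Real.exp_nat_mul]
    exact pow_le_pow_left₀ (by linarith) (by linarith [Real.add_one_le_exp x]) n
  have hnx0 : 0 ≤ n * x := by positivity
  have := (abs_le.1 (Real.abs_exp_sub_one_le (x := n * x) (by rwa [abs_of_nonneg hnx0]))).2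
  rw [abs_of_nonneg hnx0] at this
  linarith

theorem norm_list_prod_sub_pow_le {L : List R} {B : R} {u W : ℝ} (hu : 0 ≤ u)
    (hL : ∀ a ∈ L, ‖a - B‖ ≤ u) (hB : ∀ i ≤ L.length, ‖B ^ i‖ ≤ W)
    (hsmall : L.length * (W * u) ≤ 1) :
    ‖L.prod - B ^ L.length‖ ≤ 2 * L.length * W ^ 2 * u := by
  have hW : 0 ≤ W := (norm_nonneg _).trans (hB 0 (Nat.zero_le _))
  have h := norm_pow_mul_list_prod_sub_pow_le hu hB L hL 0 (by simp)
  rw [pow_zero, one_mul] at h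
  calc _ ≤ W * ((1 + W * u) ^ L.length - 1) := h
    _ ≤ W * (2 * (L.length * (W * u))) := by
        gcongr; exact one_add_pow_sub_one_le (by positivity) hsmall
    _ = 2 * L.length * W ^ 2 * u := by ring

theorem isLittleO_norm_list_prod_sub_pow {ι : Type*} {l : Filter ι} {B : R} {K : ℝ} {d m : ℕ}
    (hB : ∀ n : ℕ, ‖B ^ n‖ ≤ K * (n + 1) ^ d) {φ : ι → ℝ} (hφpos : ∀ k, 0 < φ k)
    (hφ0 : Tendsto φ l (nhds 0)) {L : ι → List R} {C : ℝ} (hLφ : ∀ k, (L k).length * φ k ≤ C)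
    {u : ι → ℝ} (hL : ∀ k, ∀ a ∈ L k, ‖a - B‖ ≤ u k)
    (hu : u =o[l] fun k => φ k ^ (m + 2 * d + 1)) :
    (fun k => ‖(L k).prod - B ^ (L k).length‖) =o[l] fun k => φ k ^ m := by
  set n : ι → ℝ := fun k => ((L k).length : ℝ) + 1
  set W : ι → ℝ := fun k => K * n k ^ d
  have hn := isBigO_natCast_add_one_inv hφpos hφ0 hLφ
  have hW : W =O[l] fun k => (φ k)⁻¹ ^ d := (hn.pow d).const_mul_left K
  have hsmall : (fun k => n k * W k * ‖u k‖) =o[l] fun k => φ k ^ (m + d) :=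
    ((hn.mul hW).mul_isLittleO hu.norm_left).congr_right fun k => by
      simp only [inv_pow]; field_simp [(hφpos k).ne']; ring
  have hlarge : (fun k => n k * W k ^ 2 * ‖u k‖) =o[l] fun k => φ k ^ m :=
    ((hn.mul (hW.pow 2)).mul_isLittleO hu.norm_left).congr_right fun k => by
      simp only [← pow_mul, inv_pow]; field_simp [(hφpos k).ne']; ring
  have hle_one : ∀ᶠ k in l, n k * W k * ‖u k‖ ≤ 1 :=
    ((isLittleO_one_iff ℝ).1 (hsmall.trans_isBigO ((hφ0.pow (m + d)).isBigO_one ℝ))).eventually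
      (eventually_le_nhds one_pos)
  refine IsBigO.trans_isLittleO (IsBigO.of_bound 2 ?_) hlarge
  filter_upwards [hle_one] with k hk
  have hK0 : 0 ≤ K := by simpa using (norm_nonneg _).trans (hB 0)
  have hbound := norm_list_prod_sub_pow_le (L := L k) (u := ‖u k‖) (W := W k) (norm_nonneg _)
    (fun a ha => (hL k a ha).trans (le_abs_self _))
    (fun i hi => (hB i).trans (by simp only [W, n]; gcongr))
    (by simp only [n] at hk; nlinarith)
  rw [norm_norm, Real.norm_of_nonneg (by positivity)]
  calc _ ≤ 2 * ((L k).length * W k ^ 2 * ‖u k‖) := hbound.trans_eq (by ring)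
    _ ≤ 2 * (n k * W k ^ 2 * ‖u k‖) := by gcongr; simp [n]

end NormedRing

theorem statement11_general (E : Type*) [NormedAddCommGroup E] [NormedSpace ℝ E]
    (ρ : GL (Fin 2) ℝ →* (E →L[ℝ] E)ˣ)
    (φ : ℕ → ℝ) (hφpos : ∀ k, 0 < φ k)
    (hφ0 : Tendsto φ atTop (nhds 0))
    (N : ℕ → ℕ) (hNbdd : ∃ C : ℝ, ∀ k, (N k : ℝ) * φ k ≤ C)
    (M : ℕ → ℕ → (E →L[ℝ] E)ˣ)
    (A : GL (Fin 2) ℝ) (hA : (A : Matrix (Fin 2) (Fin 2) ℝ) = !![1, 1; 0, 1])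
    (hclose : ∀ m : ℕ, ∃ u : ℕ → ℝ,
      (∀ k, ∀ j, 1 ≤ j → j ≤ N k →
        ‖((M k j : (E →L[ℝ] E)ˣ) : E →L[ℝ] E) - ((ρ A : (E →L[ℝ] E)ˣ) : E →L[ℝ] E)‖ ≤ u k) ∧
      u =o[atTop] fun k => φ k ^ m) :
    ∀ m : ℕ,
      (fun k =>
        ‖((List.range (N k)).reverse.map
            (fun j => ((M k (j + 1) : (E →L[ℝ] E)ˣ) : E →L[ℝ] E))).prod -
          ((ρ (A ^ N k) : (E →L[ℝ] E)ˣ) : E →L[ℝ] E)‖)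
        =o[atTop] fun k => φ k ^ m := by
  intro m
  obtain ⟨K, d, hK⟩ := exists_norm_map_pow_le ρ hA
  obtain ⟨C, hC⟩ := hNbdd
  obtain ⟨u, hMu, hu⟩ := hclose (m + 2 * d + 1)
  set L : ℕ → List (E →L[ℝ] E) := fun k =>
    (List.range (N k)).reverse.map fun j => ((M k (j + 1) : (E →L[ℝ] E)ˣ) : E →L[ℝ] E)
  have hlen : ∀ k, (L k).length = N k := by simp [L]
  have hclose_L : ∀ k, ∀ a ∈ L k, ‖a - ((ρ A : (E →L[ℝ] E)ˣ) : E →L[ℝ] E)‖ ≤ u k := by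
    intro k a ha
    obtain ⟨j, hj, rfl⟩ : ∃ j < N k, _ = a := by simpa [L] using ha
    exact hMu k (j + 1) (by omega) hj
  have := isLittleO_norm_list_prod_sub_pow hK hφpos hφ0 (by simpa only [hlen] using hC) hclose_L hu
  simpa only [hlen, map_pow, Units.val_pow_eq_pow_val] using this

/-- Let `E` be a nonzero finite-dimensional real normed vector space and
`ρ : GL₂(ℝ) → GL(E)` a continuous group homomorphism. Let `φ_k > 0`, `φ_k → 0`, `N_k ∈ ℕ`
with `N_k φ_k` bounded, and let `M_{1,k}, …, M_{N_k,k} ∈ GL(E)` satisfy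
`sup_{1 ≤ j ≤ N_k} ‖M_{j,k} − ρ(A)‖ = o(φ_k^m)` for every `m`, where `A = [[1,1],[0,1]]`.
Then for every `m` the ordered products satisfy
`‖M_{N_k,k} ⋯ M_{1,k} − ρ(A^{N_k})‖ = o(φ_k^m)` as `k → ∞`. -/
theorem statement11 (E : Type*) [NormedAddCommGroup E] [NormedSpace ℝ E]
    [FiniteDimensional ℝ E] [Nontrivial E]
    (ρ : GL (Fin 2) ℝ →* (E →L[ℝ] E)ˣ)
    (hρcont : Continuous fun g : GL (Fin 2) ℝ => ((ρ g : (E →L[ℝ] E)ˣ) : E →L[ℝ] E))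
    (φ : ℕ → ℝ) (hφpos : ∀ k, 0 < φ k)
    (hφ0 : Tendsto φ atTop (nhds 0))
    (N : ℕ → ℕ) (hNbdd : ∃ C : ℝ, ∀ k, (N k : ℝ) * φ k ≤ C)
    (M : ℕ → ℕ → (E →L[ℝ] E)ˣ)
    (A : GL (Fin 2) ℝ) (hA : (A : Matrix (Fin 2) (Fin 2) ℝ) = !![1, 1; 0, 1])
    (hclose : ∀ m : ℕ, ∃ u : ℕ → ℝ,
      (∀ k, ∀ j, 1 ≤ j → j ≤ N k →
        ‖((M k j : (E →L[ℝ] E)ˣ) : E →L[ℝ] E) - ((ρ A : (E →L[ℝ] E)ˣ) : E →L[ℝ] E)‖ ≤ u k) ∧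
      u =o[atTop] fun k => φ k ^ m) :
    ∀ m : ℕ,
      (fun k =>
        ‖((List.range (N k)).reverse.map
            (fun j => ((M k (j + 1) : (E →L[ℝ] E)ˣ) : E →L[ℝ] E))).prod -
          ((ρ (A ^ N k) : (E →L[ℝ] E)ˣ) : E →L[ℝ] E)‖)
        =o[atTop] fun k => φ k ^ m :=
  statement11_general E ρ φ hφpos hφ0 N hNbdd M A hA hclose
end

section
/- Let f : [1, +∞) → ℝ be a C²-smooth function with f(x) > 0, f''(x) > 0 and f'(x) < 0 for all x ≥ 1, and such that f(x) → 0 and f'(x) → 0 as x → +∞. Then the improper integral ∫₁^{+∞} (f''(x))^{2/3} dx converges (i.e. the function x ↦ (f''(x))^{2/3} is integrable on [1,+∞)). -/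
/-!
Write `f'` and `f''` for the one-sided derivatives on `[1, ∞)`. By Young's inequality with
weights `2/3` and `1/3`, `(f'')^{2/3} = (x f'')^{2/3} (x^{-2})^{1/3} ≤ (2/3) x f'' + (1/3) x^{-2}`,
so it suffices that `x f''` is integrable. It is the derivative of `x f' - f`, which is
nondecreasing and, since `f > 0` and `f' < 0`, bounded above by `0`.
-/

open Set Filter MeasureTheory Topology

theorem integrableOn_Ioi_deriv_of_nonneg_of_le {g g' : ℝ → ℝ} {a C : ℝ}
    (hcont : ContinuousOn g (Ici a)) (hderiv : ∀ x ∈ Ioi a, HasDerivAt g (g' x) x)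
    (g'_nonneg : ∀ x ∈ Ioi a, 0 ≤ g' x) (hg : ∀ x ∈ Ici a, g x ≤ C) :
    IntegrableOn g' (Ioi a) := by
  have hint : ∀ b, IntegrableOn g' (Ioc a b) := fun b =>
    intervalIntegral.integrableOn_deriv_of_nonneg (hcont.mono Icc_subset_Ici_self) (fun x hx => hderiv x hx.1)
      (fun x hx => g'_nonneg x hx.1)
  refine integrableOn_Ioi_of_intervalIntegral_norm_bounded (C - g a) a hint tendsto_id ?_
  filter_upwards [eventually_ge_atTop a] with b hab
  calc ∫ x in a..b, ‖g' x‖ = ∫ x in a..b, g' x := by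
        rw [intervalIntegral.integral_of_le hab, intervalIntegral.integral_of_le hab]
        exact setIntegral_congr_fun measurableSet_Ioc fun x hx =>
          Real.norm_of_nonneg (g'_nonneg x hx.1)
    _ = g b - g a := intervalIntegral.integral_eq_sub_of_hasDerivAt_of_le hab
        (hcont.mono Icc_subset_Ici_self) (fun x hx => hderiv x hx.1)
        ((intervalIntegrable_iff_integrableOn_Ioc_of_le hab).2 (hint b))
    _ ≤ C - g a := by linarith [hg b hab]

theorem ContDiffOn.hasDerivAt_derivWithin_Ici {f : ℝ → ℝ} {a x : ℝ} {n : WithTop ℕ∞}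
    (hf : ContDiffOn ℝ n f (Ici a)) (hn : n ≠ 0) (hx : a < x) :
    HasDerivAt f (derivWithin f (Ici a) x) x := by
  have hs : Ici a ∈ 𝓝 x := Ici_mem_nhds hx
  rw [derivWithin_of_mem_nhds hs]
  exact ((hf.differentiableOn hn).differentiableAt hs).hasDerivAt

theorem integrableOn_Ioi_mul_derivWithin_derivWithin {f : ℝ → ℝ} {a : ℝ} (ha : 0 ≤ a)
    (hf : ContDiffOn ℝ 2 f (Ici a)) (hf_nonneg : ∀ x ∈ Ici a, 0 ≤ f x)
    (hf'_nonpos : ∀ x ∈ Ici a, derivWithin f (Ici a) x ≤ 0)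
    (hf''_nonneg : ∀ x ∈ Ici a, 0 ≤ derivWithin (derivWithin f (Ici a)) (Ici a) x) :
    IntegrableOn (fun x => x * derivWithin (derivWithin f (Ici a)) (Ici a) x) (Ioi a) := by
  set f' := derivWithin f (Ici a)
  have hf' : ContDiffOn ℝ 1 f' (Ici a) := hf.derivWithin (uniqueDiffOn_Ici a) (by norm_num)
  refine integrableOn_Ioi_deriv_of_nonneg_of_le (g := fun x => x * f' x - f x) (C := 0)
    ((continuousOn_id.mul hf'.continuousOn).sub hf.continuousOn) (fun x hx => ?_)
    (fun x hx => mul_nonneg (ha.trans hx.le) (hf''_nonneg x hx.out.le)) (fun x hx => ?_)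
  · have h := ((hasDerivAt_id' x).mul (hf'.hasDerivAt_derivWithin_Ici one_ne_zero hx)).sub
      (hf.hasDerivAt_derivWithin_Ici two_ne_zero hx)
    exact h.congr_deriv (by ring)
  · nlinarith [hf'_nonpos x hx, hf_nonneg x hx, ha.trans hx]

theorem rpow_two_div_three_le {a x : ℝ} (ha : 0 ≤ a) (hx : 0 < x) :
    a ^ ((2:ℝ)/3) ≤ 2/3 * (x * a) + 1/3 * x ^ (-2:ℝ) := by
  have hsplit : (x * a) ^ ((2:ℝ)/3) * (x ^ (-2:ℝ)) ^ ((1:ℝ)/3) = a ^ ((2:ℝ)/3) := by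
    rw [Real.mul_rpow hx.le ha, ← Real.rpow_mul hx.le, mul_right_comm, ← Real.rpow_add hx]
    norm_num
  rw [← hsplit]
  exact Real.geom_mean_le_arith_mean2_weighted (by norm_num) (by norm_num)
    (mul_nonneg hx.le ha) (Real.rpow_nonneg hx.le _) (by norm_num)

theorem statement14_general (f : ℝ → ℝ)
    (hf : ContDiffOn ℝ 2 f (Set.Ici 1))
    (hfpos : ∀ x ∈ Set.Ici (1:ℝ), 0 < f x)
    (hf''pos : ∀ x ∈ Set.Ici (1:ℝ),
      0 < derivWithin (derivWithin f (Set.Ici 1)) (Set.Ici 1) x)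
    (hf'neg : ∀ x ∈ Set.Ici (1:ℝ), derivWithin f (Set.Ici 1) x < 0) :
    IntegrableOn
      (fun x => (derivWithin (derivWithin f (Set.Ici 1)) (Set.Ici 1) x) ^ ((2:ℝ)/3))
      (Set.Ici 1) := by
  set f'' := derivWithin (derivWithin f (Ici 1)) (Ici 1)
  have hx_f'' : IntegrableOn (fun x => x * f'' x) (Ioi 1) :=
    integrableOn_Ioi_mul_derivWithin_derivWithin zero_le_one hf (fun x hx => (hfpos x hx).le)
      (fun x hx => (hf'neg x hx).le) (fun x hx => (hf''pos x hx).le)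
  have hx_rpow : IntegrableOn (fun x : ℝ => x ^ (-2:ℝ)) (Ioi 1) :=
    (integrableOn_Ioi_rpow_iff one_pos).2 (by norm_num)
  have hf''_cont : ContinuousOn f'' (Ici 1) :=
    (hf.derivWithin (uniqueDiffOn_Ici 1) (by norm_num)).continuousOn_derivWithin
      (uniqueDiffOn_Ici 1) le_rfl
  rw [integrableOn_Ici_iff_integrableOn_Ioi]
  refine ((hx_f''.const_mul (2/3)).add (hx_rpow.const_mul (1/3))).mono' ?_ ?_
  · exact ((hf''_cont.mono Ioi_subset_Ici_self).rpow_const fun _ _ => Or.inr (by norm_num))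
      |>.aestronglyMeasurable measurableSet_Ioi
  · filter_upwards [ae_restrict_mem measurableSet_Ioi] with x hx
    have hf''x := (hf''pos x (mem_Ici_of_Ioi hx)).le
    rw [Real.norm_of_nonneg (Real.rpow_nonneg hf''x _)]
    exact rpow_two_div_three_le hf''x (zero_lt_one.trans hx)

/-- Let `f : [1,∞) → ℝ` be `C²` with `f > 0`, `f'' > 0`, `f' < 0` on
`[1,∞)` and `f(x) → 0`, `f'(x) → 0` as `x → +∞`. Then `∫₁^∞ (f''(x))^{2/3} dx`
converges. (Here `f' = derivWithin f [1,∞)` and `f'' = derivWithin f' [1,∞)`.) -/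
theorem statement14 (f : ℝ → ℝ)
    (hf : ContDiffOn ℝ 2 f (Set.Ici 1))
    (hfpos : ∀ x ∈ Set.Ici (1:ℝ), 0 < f x)
    (hf''pos : ∀ x ∈ Set.Ici (1:ℝ),
      0 < derivWithin (derivWithin f (Set.Ici 1)) (Set.Ici 1) x)
    (hf'neg : ∀ x ∈ Set.Ici (1:ℝ), derivWithin f (Set.Ici 1) x < 0)
    (hlim : Tendsto f atTop (nhds 0))
    (hlim' : Tendsto (derivWithin f (Set.Ici 1)) atTop (nhds 0)) :
    IntegrableOn
      (fun x => (derivWithin (derivWithin f (Set.Ici 1)) (Set.Ici 1) x) ^ ((2:ℝ)/3))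
      (Set.Ici 1) :=
  statement14_general f hf hfpos hf''pos hf'neg
end

section
/- Let ε > 0 and let ψ : [0,ε) → ℝ be a C^∞-smooth function with ψ ≥ 0 and ψ(0) > 0. Define v(t) := ( (3/2) ∫₀^{t} √p · ψ(p) dp )^{2/3} for t ∈ [0,ε). Then v(0) = 0, v satisfies the differential equation √(v(t)) · v'(t) = √t · ψ(t) for all t ∈ (0,ε), v can be written as v(t) = t·u(t) where u is C^∞-smooth on [0,ε) with u(0) = ψ(0)^{2/3} > 0 (so v is C^∞-smooth up to t = 0), and v'(0) = ψ(0)^{2/3} > 0. -/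
open Set MeasureTheory Filter
open scoped ENNReal NNReal

/-- `z ^ (k + 1/2) = z ^ k * √z` for `0 ≤ z`. -/
lemma st18_rpow_half (z : ℝ) (hz : 0 ≤ z) (k : ℕ) :
    z ^ ((k : ℝ) + 1/2) = z ^ k * Real.sqrt z := by
  rcases eq_or_lt_of_le hz with h | h
  · rw [← h, Real.zero_rpow (by positivity), Real.sqrt_zero, mul_zero]
  · rw [Real.rpow_add h, Real.rpow_natCast, Real.sqrt_eq_rpow]

/-- Auxiliary function: `(∫₀^t √p ψ(p) dp) / (t √t)`, extended by its limit at `0`. -/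
noncomputable def st18W (ψ : ℝ → ℝ) (t : ℝ) : ℝ :=
  if t = 0 then 2/3 * ψ 0
  else (∫ p in (0:ℝ)..t, Real.sqrt p * ψ p) / (t * Real.sqrt t)

lemma st18_clampExists {ε t1 : ℝ} (h1 : 0 ≤ t1) (h2 : t1 < ε) {f : ℝ → ℝ}
    (hf : ContinuousOn f (Ico 0 ε)) :
    ∃ G : ℝ → ℝ, Continuous G ∧ ∀ x, 0 ≤ x → x ≤ t1 → G x = f x :=
  ⟨fun x => f (max 0 (min x t1)),
    hf.comp_continuous (continuous_const.max (continuous_id.min continuous_const))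
      (fun x => ⟨le_max_left _ _, lt_of_le_of_lt (max_le h1 (min_le_right _ _)) h2⟩),
    fun x h0 h3 => by simp only [min_eq_left h3, max_eq_right h0]⟩

lemma st18_T_agree (g G w : ℝ → ℝ) {t1 r : ℝ} (hG : ∀ x, 0 ≤ x → x ≤ t1 → G x = g x)
    (hr0 : 0 ≤ r) (hr1 : r ≤ t1) :
    (∫ σ in (0:ℝ)..1, w σ * g (r * σ)) = ∫ σ in (0:ℝ)..1, w σ * G (r * σ) := by
  apply intervalIntegral.integral_congr
  intro σ hσ
  rw [uIcc_of_le zero_le_one] at hσ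
  have h1 : r * σ ≤ t1 := by nlinarith [hσ.1, hσ.2]
  show w σ * g (r * σ) = w σ * G (r * σ)
  rw [hG _ (mul_nonneg hr0 hσ.1) h1]

lemma st18_T_cont {ε : ℝ} (g : ℝ → ℝ) (hg : ContinuousOn g (Ico 0 ε)) (w : ℝ → ℝ)
    (hw : Continuous w) :
    ContinuousOn (fun t => ∫ σ in (0:ℝ)..1, w σ * g (t * σ)) (Ico 0 ε) := by
  intro t ht
  obtain ⟨t1, ht1a, ht1b⟩ : ∃ t1, t < t1 ∧ t1 < ε :=
    ⟨(t + ε) / 2, by linarith [ht.2], by linarith [ht.2]⟩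
  have ht10 : 0 ≤ t1 := by linarith [ht.1]
  obtain ⟨G, hGc, hGeq⟩ := st18_clampExists ht10 ht1b hg
  have hc : Continuous (Function.uncurry fun (r σ : ℝ) => w σ * G (r * σ)) :=
    show Continuous (fun p : ℝ × ℝ => w p.2 * G (p.1 * p.2)) from
      (hw.comp continuous_snd).mul (hGc.comp (continuous_fst.mul continuous_snd))
  have hT : Continuous (fun r => ∫ σ in (0:ℝ)..1, w σ * G (r * σ)) :=
    intervalIntegral.continuous_parametric_intervalIntegral_of_continuous' hc 0 1
  refine hT.continuousWithinAt.congr_of_eventuallyEq ?_ (st18_T_agree g G w hGeq ht.1 ht1a.le)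
  filter_upwards [self_mem_nhdsWithin, nhdsWithin_le_nhds (Iio_mem_nhds ht1a)] with r hr hr'
  exact st18_T_agree g G w hGeq hr.1 (le_of_lt hr')

lemma st18_T_deriv {ε : ℝ} (g : ℝ → ℝ) (hgd : DifferentiableOn ℝ g (Ico 0 ε))
    (hg'c : ContinuousOn (derivWithin g (Ico 0 ε)) (Ico 0 ε)) (w : ℝ → ℝ) (hw : Continuous w)
    (t : ℝ) (ht : t ∈ Ico (0:ℝ) ε) :
    HasDerivWithinAt (fun t => ∫ σ in (0:ℝ)..1, w σ * g (t * σ))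
      (∫ σ in (0:ℝ)..1, (w σ * σ) * derivWithin g (Ico 0 ε) (t * σ)) (Ico 0 ε) t := by
  obtain ⟨t1, ht1a, ht1b⟩ : ∃ t1, t < t1 ∧ t1 < ε :=
    ⟨(t + ε) / 2, by linarith [ht.2], by linarith [ht.2]⟩
  have ht10 : 0 ≤ t1 := by linarith [ht.1]
  obtain ⟨G, hGc, hGeq⟩ := st18_clampExists ht10 ht1b hgd.continuousOn
  obtain ⟨G', hG'c, hG'eq⟩ := st18_clampExists ht10 ht1b hg'c
  have hGd : ∀ y, 0 < y → y < t1 → HasDerivAt G (G' y) y := by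
    intro y hy0 hy1
    have hys : Ico (0:ℝ) ε ∈ nhds y := Ico_mem_nhds hy0 (by linarith)
    have h1 : HasDerivAt g (derivWithin g (Ico 0 ε) y) y := by
      rw [derivWithin_of_mem_nhds hys]
      exact ((hgd y ⟨hy0.le, by linarith⟩).differentiableAt hys).hasDerivAt
    rw [hG'eq y hy0.le hy1.le]
    refine h1.congr_of_eventuallyEq ?_
    filter_upwards [Ioo_mem_nhds hy0 hy1] with x hx
    exact hGeq x hx.1.le hx.2.le
  have hFTC : ∀ r, 0 ≤ r → r ≤ t1 → ∀ σ : ℝ, 0 ≤ σ → σ ≤ 1 →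
      (∫ x in (0:ℝ)..r, σ * G' (x * σ)) = G (r * σ) - G 0 := by
    intro r hr0 hr1 σ hσ0 hσ1
    rcases eq_or_lt_of_le hσ0 with h | h
    · subst h; simp
    · have := intervalIntegral.integral_eq_sub_of_hasDerivAt_of_le hr0
        (f := fun x => G (x * σ)) (f' := fun x => σ * G' (x * σ))
        ((hGc.comp (continuous_id.mul continuous_const)).continuousOn) ?_
        ((continuous_const.mul (hG'c.comp (continuous_id.mul continuous_const))).intervalIntegrable _ _)
      · rwa [zero_mul] at this
      · intro x hx
        show HasDerivAt (fun x => G (x * σ)) (σ * G' (x * σ)) x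
        have h3 : HasDerivAt (fun x => x * σ) σ x := by
          simpa using (hasDerivAt_id x).mul_const σ
        have h2 := (hGd (x * σ) (mul_pos hx.1 h) (by nlinarith [hx.1, hx.2])).comp x h3
        rw [mul_comm σ]
        exact h2
  have hc : Continuous (Function.uncurry fun (x σ : ℝ) => (w σ * σ) * G' (x * σ)) :=
    show Continuous (fun p : ℝ × ℝ => (w p.2 * p.2) * G' (p.1 * p.2)) from
      ((hw.comp continuous_snd).mul continuous_snd).mul
        (hG'c.comp (continuous_fst.mul continuous_snd))
  have hHc : Continuous (fun x => ∫ σ in (0:ℝ)..1, (w σ * σ) * G' (x * σ)) :=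
    intervalIntegral.continuous_parametric_intervalIntegral_of_continuous' hc 0 1
  have hid : ∀ r, 0 ≤ r → r ≤ t1 →
      (∫ σ in (0:ℝ)..1, w σ * G (r * σ)) = (∫ σ in (0:ℝ)..1, w σ * G (0 * σ))
        + ∫ x in (0:ℝ)..r, ∫ σ in (0:ℝ)..1, (w σ * σ) * G' (x * σ) := by
    intro r hr0 hr1
    have hswap : (∫ x in (0:ℝ)..r, ∫ σ in (0:ℝ)..1, (w σ * σ) * G' (x * σ))
        = ∫ σ in (0:ℝ)..1, ∫ x in (0:ℝ)..r, (w σ * σ) * G' (x * σ) :=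
      intervalIntegral_intervalIntegral_swap (F := fun x σ => (w σ * σ) * G' (x * σ))
        ((hc.continuousOn.integrableOn_compact (isCompact_uIcc.prod isCompact_uIcc)).mono_set
          (prod_mono uIoc_subset_uIcc uIoc_subset_uIcc))
    have hc2 : Continuous (Function.uncurry fun (σ x : ℝ) => (w σ * σ) * G' (x * σ)) :=
      show Continuous (fun p : ℝ × ℝ => (w p.1 * p.1) * G' (p.2 * p.1)) from
        ((hw.comp continuous_fst).mul continuous_fst).mul
          (hG'c.comp (continuous_snd.mul continuous_fst))
    have hI1 : IntervalIntegrable (fun σ => w σ * G (0 * σ)) volume 0 1 :=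
      (hw.mul (hGc.comp (continuous_const.mul continuous_id))).intervalIntegrable _ _
    have hI2 : IntervalIntegrable (fun σ => ∫ x in (0:ℝ)..r, (w σ * σ) * G' (x * σ))
        volume 0 1 :=
      (intervalIntegral.continuous_parametric_intervalIntegral_of_continuous' hc2 0 r).intervalIntegrable _ _
    rw [hswap, ← intervalIntegral.integral_add hI1 hI2]
    apply intervalIntegral.integral_congr
    intro σ hσ
    rw [uIcc_of_le zero_le_one] at hσ
    show w σ * G (r * σ) = w σ * G (0 * σ) + ∫ x in (0:ℝ)..r, (w σ * σ) * G' (x * σ)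
    have h1 : (∫ x in (0:ℝ)..r, (w σ * σ) * G' (x * σ))
        = w σ * ∫ x in (0:ℝ)..r, σ * G' (x * σ) := by
      rw [← intervalIntegral.integral_const_mul]
      apply intervalIntegral.integral_congr
      intro x _
      show (w σ * σ) * G' (x * σ) = w σ * (σ * G' (x * σ))
      ring
    rw [h1, hFTC r hr0 hr1 σ hσ.1 hσ.2, zero_mul]
    ring
  have hP := (hHc.integral_hasStrictDerivAt 0 t).hasDerivAt
  have hS := (hasDerivAt_const t (∫ σ in (0:ℝ)..1, w σ * G (0 * σ))).add hP
  rw [zero_add] at hS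
  have hHt : (∫ σ in (0:ℝ)..1, (w σ * σ) * derivWithin g (Ico 0 ε) (t * σ))
      = ∫ σ in (0:ℝ)..1, (w σ * σ) * G' (t * σ) :=
    st18_T_agree (derivWithin g (Ico 0 ε)) G' (fun σ => w σ * σ) hG'eq ht.1 ht1a.le
  rw [hHt]
  refine hS.hasDerivWithinAt.congr_of_eventuallyEq ?_ ?_
  · filter_upwards [self_mem_nhdsWithin, nhdsWithin_le_nhds (Iio_mem_nhds ht1a)] with r hr hr'
    show (∫ σ in (0:ℝ)..1, w σ * g (r * σ)) = _
    rw [st18_T_agree g G w hGeq hr.1 (le_of_lt hr'), hid r hr.1 (le_of_lt hr')]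
    rfl
  · show (∫ σ in (0:ℝ)..1, w σ * g (t * σ)) = _
    rw [st18_T_agree g G w hGeq ht.1 ht1a.le, hid t ht.1 ht1a.le]
    rfl

lemma st18_T_contDiffOn {ε : ℝ} : ∀ n : ℕ, ∀ g : ℝ → ℝ,
    ContDiffOn ℝ (⊤ : ℕ∞) g (Ico 0 ε) → ∀ w : ℝ → ℝ, Continuous w →
    ContDiffOn ℝ n (fun t => ∫ σ in (0:ℝ)..1, w σ * g (t * σ)) (Ico 0 ε) := by
  intro n
  induction n with
  | zero =>
    intro g hg w hw
    rw [Nat.cast_zero, contDiffOn_zero]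
    exact st18_T_cont g hg.continuousOn w hw
  | succ n ih =>
    intro g hg w hw
    have hU : UniqueDiffOn ℝ (Ico (0:ℝ) ε) := uniqueDiffOn_Ico 0 ε
    obtain ⟨hgd, hg'⟩ := (contDiffOn_infty_iff_derivWithin hU).1 hg
    have hD := st18_T_deriv g hgd hg'.continuousOn w hw
    rw [Nat.cast_succ, contDiffOn_succ_iff_derivWithin hU]
    refine ⟨fun t ht => (hD t ht).differentiableWithinAt, by simp, ?_⟩
    refine (ih _ hg' (fun σ => w σ * σ) (hw.mul continuous_id)).congr ?_
    intro t ht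
    exact (hD t ht).derivWithin (hU t ht)

lemma st18_W_eq (ψ : ℝ → ℝ) (t : ℝ) (ht : 0 ≤ t) :
    st18W ψ t = ∫ σ in (0:ℝ)..1, Real.sqrt σ * ψ (t * σ) := by
  rcases eq_or_lt_of_le ht with h | h
  · subst h
    have h23 : (∫ σ in (0:ℝ)..1, Real.sqrt σ) = 2/3 := by
      simp_rw [Real.sqrt_eq_rpow]
      rw [integral_rpow (Or.inl (by norm_num)), Real.one_rpow, Real.zero_rpow (by norm_num)]
      norm_num
    rw [st18W, if_pos rfl]
    simp only [zero_mul]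
    rw [intervalIntegral.integral_mul_const, h23]
  · have h1 : (∫ σ in (0:ℝ)..1, Real.sqrt (t * σ) * ψ (t * σ))
        = t⁻¹ * ∫ p in (0:ℝ)..t, Real.sqrt p * ψ p := by
      have := intervalIntegral.integral_comp_mul_left (fun p => Real.sqrt p * ψ p)
        (a := 0) (b := 1) (ne_of_gt h)
      simpa using this
    have h2 : (∫ σ in (0:ℝ)..1, Real.sqrt (t * σ) * ψ (t * σ))
        = Real.sqrt t * ∫ σ in (0:ℝ)..1, Real.sqrt σ * ψ (t * σ) := by
      rw [← intervalIntegral.integral_const_mul]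
      apply intervalIntegral.integral_congr
      intro σ _
      show Real.sqrt (t * σ) * ψ (t * σ) = Real.sqrt t * (Real.sqrt σ * ψ (t * σ))
      rw [Real.sqrt_mul h.le]; ring
    rw [h2] at h1
    have hne : t * Real.sqrt t ≠ 0 := ne_of_gt (mul_pos h (Real.sqrt_pos.2 h))
    rw [st18W, if_neg (ne_of_gt h), div_eq_iff hne]
    have h3 : t * (Real.sqrt t * ∫ σ in (0:ℝ)..1, Real.sqrt σ * ψ (t * σ))
        = ∫ p in (0:ℝ)..t, Real.sqrt p * ψ p := by
      rw [h1, ← mul_assoc, mul_inv_cancel₀ (ne_of_gt h), one_mul]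
    linear_combination -h3

/-- Let `ψ : [0,ε) → ℝ` be `C^∞` with `ψ ≥ 0` and `ψ(0) > 0`, and set
`v(t) = ((3/2) ∫₀^t √p ψ(p) dp)^{2/3}`. Then `v(0) = 0`; `√(v(t)) v'(t) = √t ψ(t)` on
`(0,ε)`; `v(t) = t u(t)` with `u` `C^∞` on `[0,ε)` and `u(0) = ψ(0)^{2/3} > 0` (so `v` is
`C^∞` up to `t = 0`); and `v'(0) = ψ(0)^{2/3} > 0` (one-sided derivative at `0`). -/
theorem statement18 (ε : ℝ) (hε : 0 < ε) (ψ : ℝ → ℝ)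
    (hψsmooth : ContDiffOn ℝ (⊤ : ℕ∞) ψ (Set.Ico 0 ε))
    (hψnonneg : ∀ t ∈ Set.Ico (0:ℝ) ε, 0 ≤ ψ t)
    (hψ0 : 0 < ψ 0)
    (v : ℝ → ℝ)
    (hv : ∀ t, v t = ((3/2) * ∫ p in (0:ℝ)..t, Real.sqrt p * ψ p) ^ ((2:ℝ)/3)) :
    v 0 = 0 ∧
    (∀ t ∈ Set.Ioo 0 ε, ∃ d : ℝ, HasDerivAt v d t ∧
      Real.sqrt (v t) * d = Real.sqrt t * ψ t) ∧
    (∃ u : ℝ → ℝ, ContDiffOn ℝ (⊤ : ℕ∞) u (Set.Ico 0 ε) ∧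
      (∀ t ∈ Set.Ico (0:ℝ) ε, v t = t * u t) ∧
      u 0 = (ψ 0) ^ ((2:ℝ)/3)) ∧
    HasDerivWithinAt v ((ψ 0) ^ ((2:ℝ)/3)) (Set.Ico 0 ε) 0 ∧
    0 < (ψ 0) ^ ((2:ℝ)/3) := by
  classical
  have hcont : ContinuousOn (fun p => Real.sqrt p * ψ p) (Ico 0 ε) :=
    Real.continuous_sqrt.continuousOn.mul hψsmooth.continuousOn
  have hint : ∀ {a b : ℝ}, uIcc a b ⊆ Ico 0 ε →
      IntervalIntegrable (fun p => Real.sqrt p * ψ p) volume a b :=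
    fun h => (hcont.mono h).intervalIntegrable
  obtain ⟨δ, hδ0, hδ⟩ : ∃ δ > 0, ∀ x ∈ Ico (0:ℝ) ε, x < δ → 0 < ψ x := by
    have hc : ContinuousWithinAt ψ (Ico 0 ε) 0 :=
      hψsmooth.continuousOn 0 ⟨le_refl 0, hε⟩
    have h1 : ψ ⁻¹' Ioi 0 ∈ nhdsWithin 0 (Ico 0 ε) := hc (Ioi_mem_nhds hψ0)
    rw [mem_nhdsWithin] at h1
    obtain ⟨U, hUo, hU0, hUsub⟩ := h1
    obtain ⟨δ, hδ0, hball⟩ := Metric.isOpen_iff.1 hUo 0 hU0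
    refine ⟨δ, hδ0, fun x hx hxδ => ?_⟩
    have hxU : x ∈ U := hball
      (by rw [Metric.mem_ball, Real.dist_eq, sub_zero, abs_of_nonneg hx.1]; exact hxδ)
    exact hUsub ⟨hxU, hx⟩
  have hIpos : ∀ t ∈ Ioo (0:ℝ) ε, 0 < ∫ p in (0:ℝ)..t, Real.sqrt p * ψ p := by
    intro t ht
    set σ := min t δ / 2 with hσ
    have hmin : 0 < min t δ := lt_min ht.1 hδ0
    have hσ0 : 0 < σ := by rw [hσ]; linarith
    have hσt : σ ≤ t := by have := min_le_left t δ; rw [hσ]; linarith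
    have hσδ : σ < δ := by have := min_le_right t δ; rw [hσ]; linarith
    have hsub1 : uIcc (0:ℝ) σ ⊆ Ico 0 ε := by
      rw [uIcc_of_le hσ0.le]
      exact fun x hx => ⟨hx.1, lt_of_le_of_lt hx.2 (lt_of_le_of_lt hσt ht.2)⟩
    have hsub2 : uIcc σ t ⊆ Ico 0 ε := by
      rw [uIcc_of_le hσt]
      exact fun x hx => ⟨le_trans hσ0.le hx.1, lt_of_le_of_lt hx.2 ht.2⟩
    rw [← intervalIntegral.integral_add_adjacent_intervals (hint hsub1) (hint hsub2)]
    have h1 : 0 < ∫ p in (0:ℝ)..σ, Real.sqrt p * ψ p := by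
      apply intervalIntegral.intervalIntegral_pos_of_pos_on (hint hsub1) ?_ hσ0
      intro x hx
      have hxI : x ∈ Ico (0:ℝ) ε := hsub1 (by rw [uIcc_of_le hσ0.le]; exact ⟨hx.1.le, hx.2.le⟩)
      exact mul_pos (Real.sqrt_pos.2 hx.1) (hδ x hxI (lt_trans hx.2 hσδ))
    have h2 : 0 ≤ ∫ p in σ..t, Real.sqrt p * ψ p := by
      apply intervalIntegral.integral_nonneg hσt
      intro x hx
      have hxI : x ∈ Ico (0:ℝ) ε := hsub2 (by rw [uIcc_of_le hσt]; exact hx)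
      exact mul_nonneg (Real.sqrt_nonneg _) (hψnonneg x hxI)
    linarith
  have hW0val : st18W ψ 0 = 2/3 * ψ 0 := by rw [st18W, if_pos rfl]
  have hWnonneg : ∀ t ∈ Ico (0:ℝ) ε, 0 ≤ st18W ψ t := by
    intro t ht
    rcases eq_or_lt_of_le ht.1 with h0 | h0
    · rw [← h0, hW0val]; linarith
    · rw [st18W, if_neg (ne_of_gt h0)]
      apply div_nonneg ?_ (mul_nonneg h0.le (Real.sqrt_nonneg _))
      apply intervalIntegral.integral_nonneg h0.le
      intro x hx
      exact mul_nonneg (Real.sqrt_nonneg _) (hψnonneg x ⟨hx.1, lt_of_le_of_lt hx.2 ht.2⟩)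
  have hIW : ∀ t : ℝ, 0 < t → t < ε → (∫ p in (0:ℝ)..t, Real.sqrt p * ψ p)
      = t * Real.sqrt t * st18W ψ t := by
    intro t ht0 htε
    have hne : t * Real.sqrt t ≠ 0 := ne_of_gt (mul_pos ht0 (Real.sqrt_pos.2 ht0))
    rw [st18W, if_neg (ne_of_gt ht0)]
    field_simp
  set u : ℝ → ℝ := fun t => ((3:ℝ)/2 * st18W ψ t) ^ ((2:ℝ)/3) with hu
  have hv0 : v 0 = 0 := by
    rw [hv 0, intervalIntegral.integral_same, mul_zero, Real.zero_rpow (by norm_num)]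
  have hu0 : u 0 = ψ 0 ^ ((2:ℝ)/3) := by
    rw [hu]
    simp only [hW0val]
    have h3 : (3:ℝ)/2 * (2/3 * ψ 0) = ψ 0 := by ring
    rw [h3]
  have hvu : ∀ t ∈ Ico (0:ℝ) ε, v t = t * u t := by
    intro t ht
    rcases eq_or_lt_of_le ht.1 with h0 | h0
    · rw [← h0, hv0, zero_mul]
    · rw [hv t, hIW t h0 ht.2]
      have h1 : (3:ℝ)/2 * (t * Real.sqrt t * st18W ψ t)
          = (t * Real.sqrt t) * ((3:ℝ)/2 * st18W ψ t) := by ring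
      rw [h1, Real.mul_rpow (mul_nonneg h0.le (Real.sqrt_nonneg t))
        (by linarith [hWnonneg t ht])]
      have h3 : t * Real.sqrt t = t ^ ((3:ℝ)/2) := by
        have h4 := st18_rpow_half t h0.le 1
        rw [pow_one] at h4
        rw [show ((1:ℕ):ℝ) + 1/2 = (3:ℝ)/2 by push_cast; ring] at h4
        exact h4.symm
      have h2 : (t * Real.sqrt t) ^ ((2:ℝ)/3) = t := by
        rw [h3, ← Real.rpow_mul h0.le]
        norm_num
      rw [h2]
  have hWsmooth : ContDiffOn ℝ (⊤ : ℕ∞) (st18W ψ) (Ico 0 ε) :=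
    (contDiffOn_infty.2 fun n => st18_T_contDiffOn n ψ hψsmooth Real.sqrt
      Real.continuous_sqrt).congr (fun t ht => st18_W_eq ψ t ht.1)
  have husmooth : ContDiffOn ℝ (⊤ : ℕ∞) u (Ico 0 ε) := by
    intro t ht
    rcases eq_or_lt_of_le ht.1 with h0 | h0
    · have hWC : ContDiffWithinAt ℝ (⊤ : ℕ∞) (st18W ψ) (Ico 0 ε) 0 :=
        hWsmooth 0 ⟨le_refl 0, hε⟩
      have hne : (3:ℝ)/2 * st18W ψ 0 ≠ 0 := by
        rw [hW0val]; intro h; nlinarith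
      have hru : ContDiffAt ℝ (⊤ : ℕ∞) (fun y : ℝ => y ^ ((2:ℝ)/3)) ((3:ℝ)/2 * st18W ψ 0) :=
        Real.contDiffAt_rpow_const_of_ne hne
      have := hru.comp_contDiffWithinAt 0
        (contDiffWithinAt_const.mul hWC)
      rw [← h0]
      simpa [Function.comp_def, hu] using this
    · have hWC : ContDiffWithinAt ℝ (⊤ : ℕ∞) (st18W ψ) (Ico 0 ε) t := hWsmooth t ht
      have hWpos : 0 < st18W ψ t := by
        have h5 := hIpos t ⟨h0, ht.2⟩
        rw [hIW t h0 ht.2] at h5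
        have h6 : st18W ψ t ≠ 0 := by
          intro h7; rw [h7, mul_zero] at h5; exact lt_irrefl 0 h5
        exact lt_of_le_of_ne (hWnonneg t ht) (Ne.symm h6)
      have hru : ContDiffAt ℝ (⊤ : ℕ∞) (fun y : ℝ => y ^ ((2:ℝ)/3)) ((3:ℝ)/2 * st18W ψ t) :=
        Real.contDiffAt_rpow_const_of_ne (by positivity)
      have := hru.comp_contDiffWithinAt t
        (contDiffWithinAt_const.mul hWC)
      simpa [Function.comp_def, hu] using this
  have hpart2 : ∀ t ∈ Ioo (0:ℝ) ε, ∃ d : ℝ, HasDerivAt v d t ∧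
      Real.sqrt (v t) * d = Real.sqrt t * ψ t := by
    intro t ht
    have hsub1 : uIcc (0:ℝ) t ⊆ Ico 0 ε := by
      rw [uIcc_of_le ht.1.le]
      exact fun x hx => ⟨hx.1, lt_of_le_of_lt hx.2 ht.2⟩
    have hcontIoo : ContinuousOn (fun p => Real.sqrt p * ψ p) (Ioo 0 ε) :=
      hcont.mono Ioo_subset_Ico_self
    have hψCA : ContinuousAt (fun p => Real.sqrt p * ψ p) t := by
      have hmem : Ico (0:ℝ) ε ∈ nhds t :=
        mem_nhds_iff.2 ⟨Ioo 0 ε, Ioo_subset_Ico_self, isOpen_Ioo, ht⟩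
      exact Real.continuous_sqrt.continuousAt.mul
        ((hψsmooth t (Ioo_subset_Ico_self ht)).contDiffAt hmem).continuousAt
    have hFTC : HasDerivAt (fun r => ∫ p in (0:ℝ)..r, Real.sqrt p * ψ p)
        (Real.sqrt t * ψ t) t :=
      intervalIntegral.integral_hasDerivAt_right (hint hsub1)
        (hcontIoo.stronglyMeasurableAtFilter isOpen_Ioo t ht) hψCA
    have hFd : HasDerivAt (fun r => (3:ℝ)/2 * ∫ p in (0:ℝ)..r, Real.sqrt p * ψ p)
        ((3:ℝ)/2 * (Real.sqrt t * ψ t)) t := hFTC.const_mul ((3:ℝ)/2)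
    have hApos : 0 < (3:ℝ)/2 * ∫ p in (0:ℝ)..t, Real.sqrt p * ψ p := by
      have := hIpos t ht
      linarith
    have hvf : v = fun r => ((3:ℝ)/2 * ∫ p in (0:ℝ)..r, Real.sqrt p * ψ p) ^ ((2:ℝ)/3) :=
      funext hv
    have hrpow : HasDerivAt (fun y : ℝ => y ^ ((2:ℝ)/3))
        ((2:ℝ)/3 * ((3:ℝ)/2 * ∫ p in (0:ℝ)..t, Real.sqrt p * ψ p) ^ ((2:ℝ)/3 - 1))
        ((3:ℝ)/2 * ∫ p in (0:ℝ)..t, Real.sqrt p * ψ p) :=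
      Real.hasDerivAt_rpow_const (Or.inl (ne_of_gt hApos))
    have hd : HasDerivAt v
        (((2:ℝ)/3 * ((3:ℝ)/2 * ∫ p in (0:ℝ)..t, Real.sqrt p * ψ p) ^ ((2:ℝ)/3 - 1)) *
          ((3:ℝ)/2 * (Real.sqrt t * ψ t))) t := by
      rw [hvf]
      exact hrpow.comp t hFd
    refine ⟨_, hd, ?_⟩
    set A := (3:ℝ)/2 * ∫ p in (0:ℝ)..t, Real.sqrt p * ψ p with hA
    have hsv : Real.sqrt (v t) = A ^ ((1:ℝ)/3) := by
      rw [hv t, ← hA, Real.sqrt_eq_rpow, ← Real.rpow_mul hApos.le]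
      norm_num
    rw [hsv, show (2:ℝ)/3 - 1 = -(1/3) by norm_num, Real.rpow_neg hApos.le]
    have hA3 : A ^ ((1:ℝ)/3) ≠ 0 := ne_of_gt (Real.rpow_pos_of_pos hApos _)
    field_simp
  have hud : DifferentiableWithinAt ℝ u (Ico 0 ε) 0 :=
    (husmooth.differentiableOn (by simp)) 0 ⟨le_refl 0, hε⟩
  have h1 : HasDerivWithinAt (fun s => s * u s)
      (1 * u 0 + 0 * derivWithin u (Ico 0 ε) 0) (Ico 0 ε) 0 :=
    (hasDerivWithinAt_id 0 _).mul hud.hasDerivWithinAt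
  have h2 : HasDerivWithinAt v (1 * u 0 + 0 * derivWithin u (Ico 0 ε) 0) (Ico 0 ε) 0 :=
    h1.congr hvu (by rw [hv0, zero_mul])
  have hpart4 : HasDerivWithinAt v (ψ 0 ^ ((2:ℝ)/3)) (Ico 0 ε) 0 := by
    have h3 : 1 * u 0 + 0 * derivWithin u (Ico 0 ε) 0 = ψ 0 ^ ((2:ℝ)/3) := by
      rw [hu0]; ring
    rw [← h3]
    exact h2
  exact ⟨hv0, hpart2, ⟨u, husmooth, hvu, hu0⟩, hpart4, Real.rpow_pos_of_pos hψ0 _⟩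
end
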